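/- arXiv:2503.01537 — 5 statements merged into one kernel-verified Lean document; each statement's English description precedes it below -/
import Mathlib

section
/- Let (x_i)_{i∈I} be a finite nonempty family of points of ℝ^n and let τ > 0. Define, for y ∈ ℝ^n, the Gaussian weights w_i(y) := exp(−‖y−x_i‖²/(2τ)), the mixture m(y) := Σ_{i∈I} w_i(y), the normalized weights π_i(y) := w_i(y)/m(y), the barycenter b(y) := Σ_{i∈I} π_i(y) x_i, the centered points x̃_i(y) := x_i − b(y), the drift ṁ(y) := y − b(y), the field F(y) := τ^{−1} Σ_{i∈I} π_i(y) ⟨y − x_i, x̃_i(y)⟩ x̃_i(y), and the quantum potential Q(y) := −Δ√(m)(y) / (2√(m)(y)). Then for every y ∈ ℝ^n one has 4τ² ∇Q(y) = −ṁ(y) + F(y). -/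
open scoped RealInnerProductSpace BigOperators

noncomputable section

/-- Gaussian weight `w_i(y) = exp(−‖y−x_i‖²/(2τ))`. -/
def gaussW {n : ℕ} {I : Type*} (x : I → EuclideanSpace ℝ (Fin n)) (τ : ℝ) (i : I)
    (y : EuclideanSpace ℝ (Fin n)) : ℝ :=
  Real.exp (-‖y - x i‖ ^ 2 / (2 * τ))

/-- The Gaussian mixture `m(y) = ∑_i w_i(y)`. -/
def mix {n : ℕ} {I : Type*} [Fintype I] (x : I → EuclideanSpace ℝ (Fin n)) (τ : ℝ)
    (y : EuclideanSpace ℝ (Fin n)) : ℝ :=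
  ∑ i, gaussW x τ i y

/-- Normalized weight `π_i(y) = w_i(y)/m(y)`. -/
def piW {n : ℕ} {I : Type*} [Fintype I] (x : I → EuclideanSpace ℝ (Fin n)) (τ : ℝ) (i : I)
    (y : EuclideanSpace ℝ (Fin n)) : ℝ :=
  gaussW x τ i y / mix x τ y

/-- The barycenter `b(y) = ∑_i π_i(y) x_i`. -/
def bary {n : ℕ} {I : Type*} [Fintype I] (x : I → EuclideanSpace ℝ (Fin n)) (τ : ℝ)
    (y : EuclideanSpace ℝ (Fin n)) : EuclideanSpace ℝ (Fin n) :=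
  ∑ i, piW x τ i y • x i

/-- The centered point `x̃_i(y) = x_i − b(y)`. -/
def xtil {n : ℕ} {I : Type*} [Fintype I] (x : I → EuclideanSpace ℝ (Fin n)) (τ : ℝ) (i : I)
    (y : EuclideanSpace ℝ (Fin n)) : EuclideanSpace ℝ (Fin n) :=
  x i - bary x τ y

/-- The drift `ṁ(y) = y − b(y)`. -/
def mdot {n : ℕ} {I : Type*} [Fintype I] (x : I → EuclideanSpace ℝ (Fin n)) (τ : ℝ)
    (y : EuclideanSpace ℝ (Fin n)) : EuclideanSpace ℝ (Fin n) :=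
  y - bary x τ y

/-- The field `F(y) = τ⁻¹ ∑_i π_i(y) ⟪y − x_i, x̃_i(y)⟫ x̃_i(y)`. -/
def quantumForce {n : ℕ} {I : Type*} [Fintype I] (x : I → EuclideanSpace ℝ (Fin n)) (τ : ℝ)
    (y : EuclideanSpace ℝ (Fin n)) : EuclideanSpace ℝ (Fin n) :=
  τ⁻¹ • ∑ i, (piW x τ i y * ⟪y - x i, xtil x τ i y⟫) • xtil x τ i y

/-- The Laplacian on `ℝ^n`, as the sum of the second partial derivatives. -/
def lap {n : ℕ} (f : EuclideanSpace ℝ (Fin n) → ℝ) (y : EuclideanSpace ℝ (Fin n)) : ℝ :=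
  ∑ j, fderiv ℝ (fun z => fderiv ℝ f z (EuclideanSpace.single j 1)) y (EuclideanSpace.single j 1)

/-- The quantum potential `Q(y) = −Δ√m(y)/(2√m(y))` of the Gaussian mixture. -/
def quantumPot {n : ℕ} {I : Type*} [Fintype I] (x : I → EuclideanSpace ℝ (Fin n)) (τ : ℝ)
    (y : EuclideanSpace ℝ (Fin n)) : ℝ :=
  -lap (fun z => Real.sqrt (mix x τ z)) y / (2 * Real.sqrt (mix x τ y))

/-!
For positive `m`, `Δ√m / √m = Δm / (2m) - ‖∇m‖² / (4m²)`. For the Gaussian mixture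
`∇m = -τ⁻¹ m ṁ` and `Δm = ∑ w_i (τ⁻² ‖y - x_i‖² - n τ⁻¹)`, so that
`4τ² Q = nτ - ∑ π_i ‖y - x_i‖² + ‖ṁ‖² / 2`. Differentiating with `∇π_i = τ⁻¹ π_i x̃_i` gives
`4τ² ∇Q = -ṁ - τ⁻¹ ∑ π_i (‖y - x_i‖² + ⟪x_i, ṁ⟫) x̃_i`, and this is `-ṁ + F` because
`‖y - x_i‖² + ⟪x_i, ṁ⟫ + ⟪y - x_i, x̃_i⟫ = ⟪y, ṁ⟫` does not depend on `i` while `∑ π_i x̃_i = 0`.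
-/

section Laplacian

variable {n : ℕ}

local notation "E" => EuclideanSpace ℝ (Fin n)

theorem lap_eq_trace {f : E → ℝ} {g : E → E} {g' : E →L[ℝ] E} {y : E}
    (hf : ∀ z, HasGradientAt f (g z) z) (hg : HasFDerivAt g g' y) :
    lap f y = LinearMap.trace ℝ E g' := by
  have hpartial (j : Fin n) :
      HasFDerivAt (fun z => fderiv ℝ f z (EuclideanSpace.single j 1))
        ((innerSL ℝ (EuclideanSpace.single j 1 : E)).comp g') y := by
    simp_rw [(hf _).fderiv_apply, real_inner_comm _ (g _)]
    exact (innerSL ℝ _).hasFDerivAt.comp y hg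
  rw [lap, LinearMap.trace_eq_sum_inner _ (EuclideanSpace.basisFun (Fin n) ℝ)]
  refine Finset.sum_congr rfl fun j _ => ?_
  simp [(hpartial j).fderiv]

theorem lap_sqrt {m : E → ℝ} {g : E → E} {g' : E →L[ℝ] E} {y : E}
    (hpos : ∀ z, 0 < m z) (hm : ∀ z, HasGradientAt m (g z) z) (hg : HasFDerivAt g g' y) :
    lap (fun z => √(m z)) y
      = (LinearMap.trace ℝ E g' - ‖g y‖ ^ 2 / (2 * m y)) / (2 * √(m y)) := by
  have hsqrt (z : E) : HasGradientAt (fun z => √(m z)) ((2 * √(m z))⁻¹ • g z) z := by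
    refine ((hm z).hasFDerivAt.sqrt (hpos z).ne').congr_fderiv ?_
    ext e
    simp
  have hs : 0 < √(m y) := Real.sqrt_pos.mpr (hpos y)
  have hcoeff : HasFDerivAt (fun z => (2 * √(m z))⁻¹)
      ((-((2 * √(m y)) ^ 2)⁻¹) • (2 : ℝ) • (1 / (2 * √(m y))) • innerSL ℝ (g y)) y :=
    (hasDerivAt_inv (by positivity)).comp_hasFDerivAt y
      (((hm y).hasFDerivAt.sqrt (hpos y).ne').const_mul 2)
  rw [lap_eq_trace hsqrt (hcoeff.smul hg)]
  simp only [ContinuousLinearMap.toLinearMap_add, ContinuousLinearMap.toLinearMap_smul,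
    ContinuousLinearMap.coe_smulRight, map_add, map_smul, LinearMap.trace_smulRight,
    LinearMap.smul_apply, ContinuousLinearMap.coe_coe, innerSL_apply_apply, smul_eq_mul,
    real_inner_self_eq_norm_sq]
  have hsq : m y = √(m y) ^ 2 := (Real.sq_sqrt (hpos y).le).symm
  set s := √(m y)
  rw [hsq]
  field_simp
  ring

end Laplacian

section GaussianMixture

variable {n : ℕ} {I : Type*} (x : I → EuclideanSpace ℝ (Fin n)) (τ : ℝ)

local notation "E" => EuclideanSpace ℝ (Fin n)

def gradGaussW (i : I) (z : E) : E := (-(τ⁻¹ * gaussW x τ i z)) • (z - x i)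

def hessGaussW (i : I) (y : E) : E →L[ℝ] E :=
  (τ⁻¹ * gaussW x τ i y) •
    (τ⁻¹ • (innerSL ℝ (y - x i)).smulRight (y - x i) - ContinuousLinearMap.id ℝ E)

theorem hasGradientAt_gaussW (i : I) (z : E) :
    HasGradientAt (gaussW x τ i) (gradGaussW x τ i z) z := by
  have h := (((hasFDerivAt_id z).sub_const (x i)).norm_sq.neg.mul_const (2 * τ)⁻¹).exp
  unfold gaussW
  simp only [div_eq_mul_inv]
  refine h.congr_fderiv ?_
  ext e
  simp only [gradGaussW, gaussW, smul_apply, neg_apply, ContinuousLinearMap.comp_apply,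
    ContinuousLinearMap.id_apply, innerSL_apply_apply, InnerProductSpace.toDual_apply_apply,
    real_inner_smul_left, nsmul_eq_mul, smul_eq_mul, Pi.neg_apply, id, div_eq_mul_inv]
  ring

theorem hasFDerivAt_gradGaussW (i : I) (y : E) :
    HasFDerivAt (gradGaussW x τ i) (hessGaussW x τ i y) y := by
  have h := (((hasGradientAt_gaussW x τ i y).hasFDerivAt.const_mul τ⁻¹).neg).smul
    ((hasFDerivAt_id y).sub_const (x i))
  refine h.congr_fderiv ?_
  ext1 e
  simp only [hessGaussW, gradGaussW, add_apply, sub_apply, smul_apply, neg_apply,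
    ContinuousLinearMap.smulRight_apply, ContinuousLinearMap.id_apply, innerSL_apply_apply,
    InnerProductSpace.toDual_apply_apply, real_inner_smul_left, smul_eq_mul, Pi.neg_apply, id]
  module

theorem trace_hessGaussW (i : I) (y : E) :
    LinearMap.trace ℝ E (hessGaussW x τ i y)
      = τ⁻¹ * gaussW x τ i y * (τ⁻¹ * ‖y - x i‖ ^ 2 - n) := by
  rw [hessGaussW, ContinuousLinearMap.toLinearMap_smul, ContinuousLinearMap.toLinearMap_sub,
    ContinuousLinearMap.toLinearMap_smul, map_smul, map_sub, map_smul,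
    ContinuousLinearMap.coe_smulRight, ContinuousLinearMap.coe_id, LinearMap.trace_smulRight,
    LinearMap.trace_id, finrank_euclideanSpace_fin, ContinuousLinearMap.coe_coe,
    innerSL_apply_apply, real_inner_self_eq_norm_sq, smul_eq_mul, smul_eq_mul]

variable [Fintype I]

theorem hasGradientAt_mix (z : E) :
    HasGradientAt (mix x τ) (∑ i, gradGaussW x τ i z) z := by
  have h := HasFDerivAt.fun_sum fun i (_ : i ∈ Finset.univ) =>
    (hasGradientAt_gaussW x τ i z).hasFDerivAt
  refine h.congr_fderiv ?_
  ext e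
  simp

theorem xtil_eq_mdot_sub (i : I) (y : E) : xtil x τ i y = mdot x τ y - (y - x i) := by
  rw [xtil, mdot]
  abel

variable [Nonempty I]

theorem mix_pos (y : E) : 0 < mix x τ y :=
  Finset.sum_pos (fun _ _ => Real.exp_pos _) Finset.univ_nonempty

theorem lap_sqrt_mix (y : E) :
    lap (fun z => √(mix x τ z)) y
      = (∑ i, τ⁻¹ * gaussW x τ i y * (τ⁻¹ * ‖y - x i‖ ^ 2 - n)
          - ‖∑ i, gradGaussW x τ i y‖ ^ 2 / (2 * mix x τ y))
        / (2 * √(mix x τ y)) := by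
  rw [lap_sqrt (mix_pos x τ) (hasGradientAt_mix x τ)
    (HasFDerivAt.fun_sum fun i (_ : i ∈ Finset.univ) => hasFDerivAt_gradGaussW x τ i y),
    ContinuousLinearMap.toLinearMap_sum, map_sum]
  simp only [trace_hessGaussW]

theorem gaussW_eq_mix_mul_piW (i : I) (y : E) : gaussW x τ i y = mix x τ y * piW x τ i y :=
  (mul_div_cancel₀ _ (mix_pos x τ y).ne').symm

theorem sum_piW (y : E) : ∑ i, piW x τ i y = 1 := by
  simp only [piW, ← Finset.sum_div]
  exact div_self (mix_pos x τ y).ne'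

theorem sum_piW_smul_sub (y : E) : ∑ i, piW x τ i y • (y - x i) = mdot x τ y := by
  simp only [smul_sub, Finset.sum_sub_distrib, ← Finset.sum_smul, sum_piW, one_smul, mdot, bary]

theorem sum_piW_smul_xtil (y : E) : ∑ i, piW x τ i y • xtil x τ i y = 0 := by
  simp only [xtil, smul_sub, Finset.sum_sub_distrib, ← Finset.sum_smul, sum_piW, one_smul, bary,
    sub_self]

theorem sum_gradGaussW (y : E) :
    ∑ i, gradGaussW x τ i y = (-(τ⁻¹ * mix x τ y)) • mdot x τ y := by
  simp only [gradGaussW, gaussW_eq_mix_mul_piW x τ _ y, ← sum_piW_smul_sub, Finset.smul_sum,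
    smul_smul]
  exact Finset.sum_congr rfl fun i _ => by module

theorem quantumPot_eq (hτ : τ ≠ 0) (y : E) :
    quantumPot x τ y
      = (n * τ - ∑ i, piW x τ i y * ‖y - x i‖ ^ 2 + ‖mdot x τ y‖ ^ 2 / 2) / (4 * τ ^ 2) := by
  have hm := mix_pos x τ y
  have htrace : ∑ i, τ⁻¹ * gaussW x τ i y * (τ⁻¹ * ‖y - x i‖ ^ 2 - n)
      = τ⁻¹ * mix x τ y * (τ⁻¹ * ∑ i, piW x τ i y * ‖y - x i‖ ^ 2 - n * ∑ i, piW x τ i y) := by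
    rw [mul_sub, Finset.mul_sum, Finset.mul_sum, Finset.mul_sum, Finset.mul_sum,
      ← Finset.sum_sub_distrib]
    exact Finset.sum_congr rfl fun i _ => by rw [gaussW_eq_mix_mul_piW]; ring
  rw [quantumPot, lap_sqrt_mix, htrace, sum_piW, sum_gradGaussW, norm_smul, mul_pow,
    Real.norm_eq_abs, sq_abs]
  have hsq : mix x τ y = √(mix x τ y) ^ 2 := (Real.sq_sqrt hm.le).symm
  have hs : 0 < √(mix x τ y) := Real.sqrt_pos.mpr hm
  set s := √(mix x τ y)
  rw [hsq]
  field_simp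
  ring

theorem hasGradientAt_piW (i : I) (z : E) :
    HasGradientAt (piW x τ i) ((τ⁻¹ * piW x τ i z) • xtil x τ i z) z := by
  have hm := mix_pos x τ z
  have hinv := (hasDerivAt_inv hm.ne').comp_hasFDerivAt z (hasGradientAt_mix x τ z).hasFDerivAt
  rw [sum_gradGaussW] at hinv
  have h := (hasGradientAt_gaussW x τ i z).hasFDerivAt.mul hinv
  refine h.congr_fderiv ?_
  ext e
  simp only [add_apply, smul_apply, Function.comp_apply, InnerProductSpace.toDual_apply_apply,
    real_inner_smul_left, smul_eq_mul, piW, gradGaussW, xtil_eq_mdot_sub, inner_sub_left]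
  field_simp
  ring

theorem hasFDerivAt_bary (y : E) :
    HasFDerivAt (bary x τ)
      (∑ i, (innerSL ℝ ((τ⁻¹ * piW x τ i y) • xtil x τ i y)).smulRight (x i)) y :=
  HasFDerivAt.fun_sum fun i _ => (hasGradientAt_piW x τ i y).hasFDerivAt.smul_const (x i)

theorem quantumForce_eq (y : E) :
    quantumForce x τ y = -(τ⁻¹ • (∑ i, (piW x τ i y * ‖y - x i‖ ^ 2) • xtil x τ i y
      + ∑ i, (piW x τ i y * ⟪x i, mdot x τ y⟫) • xtil x τ i y)) := by
  have hcoeff (i : I) : ⟪y - x i, xtil x τ i y⟫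
      = ⟪y, mdot x τ y⟫ - (‖y - x i‖ ^ 2 + ⟪x i, mdot x τ y⟫) := by
    rw [xtil_eq_mdot_sub, inner_sub_right, real_inner_self_eq_norm_sq, inner_sub_left]
    ring
  have hcentered : ∑ i, (piW x τ i y * ⟪y, mdot x τ y⟫) • xtil x τ i y = 0 := by
    simp_rw [mul_comm (piW x τ _ y), ← smul_smul, ← Finset.smul_sum, sum_piW_smul_xtil, smul_zero]
  simp_rw [quantumForce, hcoeff, mul_sub, sub_smul, Finset.sum_sub_distrib, hcentered, zero_sub,
    mul_add, add_smul, Finset.sum_add_distrib, smul_neg]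

theorem hasGradientAt_sum_piW_mul_norm_sq (y : E) :
    HasGradientAt (fun z => ∑ i, piW x τ i z * ‖z - x i‖ ^ 2)
      ((2 : ℝ) • mdot x τ y + τ⁻¹ • ∑ i, (piW x τ i y * ‖y - x i‖ ^ 2) • xtil x τ i y) y := by
  have h := HasFDerivAt.fun_sum fun i (_ : i ∈ Finset.univ) =>
    (hasGradientAt_piW x τ i y).hasFDerivAt.mul ((hasFDerivAt_id y).sub_const (x i)).norm_sq
  refine h.congr_fderiv ?_
  ext e
  rw [← sum_piW_smul_sub]
  simp only [sum_apply, add_apply, smul_apply, ContinuousLinearMap.comp_apply,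
    InnerProductSpace.toDual_apply_apply, innerSL_apply_apply, inner_add_left, sum_inner,
    Finset.mul_sum, ← Finset.sum_add_distrib, real_inner_smul_left, smul_eq_mul, nsmul_eq_mul,
    ContinuousLinearMap.id_apply, id]
  exact Finset.sum_congr rfl fun i _ => by push_cast; ring

theorem hasFDerivAt_mdot (y : E) :
    HasFDerivAt (mdot x τ)
      (ContinuousLinearMap.id ℝ E
        - ∑ i, (innerSL ℝ ((τ⁻¹ * piW x τ i y) • xtil x τ i y)).smulRight (x i)) y :=
  (hasFDerivAt_id y).sub (hasFDerivAt_bary x τ y)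

theorem hasGradientAt_norm_sq_mdot (y : E) :
    HasGradientAt (fun z => ‖mdot x τ z‖ ^ 2)
      ((2 : ℝ) • (mdot x τ y - τ⁻¹ • ∑ i, (piW x τ i y * ⟪x i, mdot x τ y⟫) • xtil x τ i y)) y := by
  have h := (hasFDerivAt_mdot x τ y).norm_sq
  refine h.congr_fderiv ?_
  ext e
  simp only [sum_apply, sub_apply, smul_apply, ContinuousLinearMap.comp_apply,
    InnerProductSpace.toDual_apply_apply, innerSL_apply_apply, inner_sub_left, inner_sub_right,
    inner_sum, sum_inner, Finset.mul_sum, real_inner_smul_left, real_inner_smul_right, nsmul_eq_mul,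
    ContinuousLinearMap.id_apply, ContinuousLinearMap.smulRight_apply]
  push_cast
  congr 2
  exact Finset.sum_congr rfl fun i _ => by rw [real_inner_comm (x i)]; ring

theorem hasGradientAt_quantumPot (hτ : τ ≠ 0) (y : E) :
    HasGradientAt (quantumPot x τ) ((4 * τ ^ 2)⁻¹ • (-mdot x τ y + quantumForce x τ y)) y := by
  have h := (((hasFDerivAt_const (n * τ : ℝ) y).sub
    (hasGradientAt_sum_piW_mul_norm_sq x τ y).hasFDerivAt).add
    ((hasGradientAt_norm_sq_mdot x τ y).hasFDerivAt.mul_const 2⁻¹)).mul_const (4 * τ ^ 2)⁻¹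
  rw [funext (quantumPot_eq x τ hτ), quantumForce_eq]
  simp only [div_eq_mul_inv]
  refine h.congr_fderiv ?_
  ext e
  simp only [add_apply, sub_apply, smul_apply, InnerProductSpace.toDual_apply_apply,
    zero_apply, inner_add_left, inner_sub_left, inner_neg_left,
    real_inner_smul_left, smul_eq_mul]
  ring

end GaussianMixture

/-- Lemma 6.4 of the paper. For a finite nonempty family `(x i)` of points of
`ℝ^n` and `τ > 0`, the gradient of the quantum potential of the Gaussian mixture satisfies
`4τ² ∇Q(y) = −ṁ(y) + F(y)` for every `y ∈ ℝ^n`. -/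
theorem statement0 {n : ℕ} {I : Type*} [Fintype I] [Nonempty I]
    (x : I → EuclideanSpace ℝ (Fin n)) (τ : ℝ) (hτ : 0 < τ) (y : EuclideanSpace ℝ (Fin n)) :
    (4 * τ ^ 2) • gradient (quantumPot x τ) y = -mdot x τ y + quantumForce x τ y := by
  rw [(hasGradientAt_quantumPot x τ hτ.ne' y).gradient, smul_inv_smul₀ (by positivity)]
end
end

section
/- Let x_1, …, x_m be finitely many vectors of a real inner product space, all of norm r, and all at the same distance ℓ from a vector y (i.e. ‖x_i‖ = r and ‖y − x_i‖ = ℓ for every i). Let x̄ := (1/m) Σ_i x_i. Then (1/m) Σ_{i=1}^m ⟨y − x_i, x_i − x̄⟩ (x_i − x̄) = (1/m) Σ_{i=1}^m ⟨x̄, x_i − x̄⟩ (x_i − x̄). -/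
/-!
Since every `x i` lies on the sphere of radius `r` about `0` and on the sphere of radius `ℓ`
about `y`, polarization makes `⟪y, x i⟫` independent of `i`. Hence the two coefficients
`⟪y - x i, x i - x̄⟫` and `⟪x̄, x i - x̄⟫` differ by a constant, and a constant multiple of the
deviations `x i - x̄` from the barycenter sums to zero.
-/

open Finset
open scoped RealInnerProductSpace

section Barycenter

variable {ι 𝕜 M : Type*} [DivisionRing 𝕜] [CharZero 𝕜] [AddCommGroup M] [Module 𝕜 M]

theorem Finset.sum_sub_barycenter (s : Finset ι) (x : ι → M) :
    ∑ i ∈ s, (x i - (#s : 𝕜)⁻¹ • ∑ j ∈ s, x j) = 0 := by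
  rcases s.eq_empty_or_nonempty with rfl | hs
  · simp
  have hcard : (#s : 𝕜) ≠ 0 := Nat.cast_ne_zero.mpr hs.card_pos.ne'
  rw [sum_sub_distrib, sum_const, ← Nat.cast_smul_eq_nsmul 𝕜, smul_smul,
    mul_inv_cancel₀ hcard, one_smul, sub_self]

theorem Finset.sum_add_const_smul_sub_barycenter (s : Finset ι) (x : ι → M) (a : ι → 𝕜)
    (K : 𝕜) :
    ∑ i ∈ s, (a i + K) • (x i - (#s : 𝕜)⁻¹ • ∑ j ∈ s, x j)
      = ∑ i ∈ s, a i • (x i - (#s : 𝕜)⁻¹ • ∑ j ∈ s, x j) := by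
  simp only [add_smul, sum_add_distrib, ← smul_sum, sum_sub_barycenter, smul_zero, add_zero]

end Barycenter

theorem real_inner_eq_of_norm_eq_of_norm_sub_eq {E : Type*} [NormedAddCommGroup E]
    [InnerProductSpace ℝ E] {a y : E} {r ℓ : ℝ} (ha : ‖a‖ = r) (hya : ‖y - a‖ = ℓ) :
    ⟪y, a⟫ = (‖y‖ ^ 2 + r ^ 2 - ℓ ^ 2) / 2 := by
  rw [← ha, ← hya, norm_sub_sq_real]
  ring

/-- For finitely many vectors `x 1, …, x m` of a real inner product space,
all of norm `r` and all at the same distance `ℓ` from a vector `y`, with barycenter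
`x̄ = (1/m) ∑ x i`, one has
`(1/m) ∑ ⟪y − x i, x i − x̄⟫ (x i − x̄) = (1/m) ∑ ⟪x̄, x i − x̄⟫ (x i − x̄)`. -/
theorem statement7 {E : Type*} [NormedAddCommGroup E] [InnerProductSpace ℝ E]
    (m : ℕ) (x : Fin m → E) (y : E) (r ℓ : ℝ)
    (hxr : ∀ i, ‖x i‖ = r) (hxℓ : ∀ i, ‖y - x i‖ = ℓ)
    (xbar : E) (hxbar : xbar = (m : ℝ)⁻¹ • ∑ i, x i) :
    (m : ℝ)⁻¹ • ∑ i, ⟪y - x i, x i - xbar⟫ • (x i - xbar)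
      = (m : ℝ)⁻¹ • ∑ i, ⟪xbar, x i - xbar⟫ • (x i - xbar) := by
  set K := (‖y‖ ^ 2 + r ^ 2 - ℓ ^ 2) / 2 - r ^ 2 - ⟪y - xbar, xbar⟫
  have hcoeff : ∀ i, ⟪y - x i, x i - xbar⟫ = ⟪xbar, x i - xbar⟫ + K := by
    intro i
    have hxx : ⟪x i, x i⟫ = r ^ 2 := by rw [real_inner_self_eq_norm_sq, hxr i]
    simp only [K, ← real_inner_eq_of_norm_eq_of_norm_sub_eq (hxr i) (hxℓ i), inner_sub_left,
      inner_sub_right, real_inner_comm (x i) xbar, hxx]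
    ring
  have hcard : (m : ℝ) = #(univ : Finset (Fin m)) := by simp
  simp only [hcoeff]
  rw [hxbar, hcard, sum_add_const_smul_sub_barycenter]
end

section
/- Let (x_i)_{i∈I} be a finite nonempty family of points of ℝ^n and let y ∈ ℝ^n. Assume there is an index i_0 ∈ I such that for every i ∈ I, either x_i = x_{i_0} or ‖y − x_{i_0}‖ < ‖y − x_i‖ (i.e. the closest point of the family to y is unique as a point). Then lim_{ε→0⁺} ( Σ_{i∈I} x_i exp(−‖y−x_i‖²/(2ε)) ) / ( Σ_{i∈I} exp(−‖y−x_i‖²/(2ε)) ) = x_{i_0}. -/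
/-!
Subtracting the minimal cost `f (x i0)` from every cost does not change the softmax barycenter.
After this shift the weight of an index `i` is `exp (-(f (x i) - f (x i0)) / t)`, which is `1`
when `x i = x i0` and tends to `0` as `t → 0⁺` otherwise. The barycenter depends continuously
on the weights as long as their total is nonzero, so it tends to the barycenter of these limit
weights, which are supported on indices with `x i = x i0`.
-/

open Filter Topology

section WeightedAverage

variable {α I E : Type*} [Fintype I] [NormedAddCommGroup E] [NormedSpace ℝ E]

theorem inv_sum_smul_sum_eq_of_support {L : I → ℝ} {x : I → E} {p : E}
    (hx : ∀ i, L i ≠ 0 → x i = p) (hL : ∑ i, L i ≠ 0) :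
    (∑ i, L i)⁻¹ • ∑ i, L i • x i = p := by
  have hsum : ∑ i, L i • x i = ∑ i, L i • p := by
    refine Finset.sum_congr rfl fun i _ => ?_
    by_cases hi : L i = 0
    · simp [hi]
    · rw [hx i hi]
  rw [hsum, ← Finset.sum_smul, smul_smul, inv_mul_cancel₀ hL, one_smul]

theorem Filter.Tendsto.inv_sum_smul_sum {l : Filter α} {w : I → α → ℝ} {L : I → ℝ}
    (hw : ∀ i, Tendsto (w i) l (𝓝 (L i))) (hL : ∑ i, L i ≠ 0) (x : I → E) :
    Tendsto (fun t => (∑ i, w i t)⁻¹ • ∑ i, w i t • x i) l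
      (𝓝 ((∑ i, L i)⁻¹ • ∑ i, L i • x i)) :=
  (tendsto_finsetSum _ fun i _ => hw i).inv₀ hL |>.smul <|
    tendsto_finsetSum _ fun i _ => (hw i).smul_const (x i)

end WeightedAverage

theorem tendsto_exp_neg_div_nhdsGT_zero {a : ℝ} (ha : 0 < a) :
    Tendsto (fun t : ℝ => Real.exp (-a / t)) (𝓝[>] 0) (𝓝 0) := by
  have hlin : Tendsto (fun t : ℝ => -a * t⁻¹) (𝓝[>] 0) atBot :=
    tendsto_inv_nhdsGT_zero.const_mul_atTop_of_neg (neg_neg_of_pos ha)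
  exact Real.tendsto_exp_atBot.comp hlin

section GibbsBarycenter

variable {I E : Type*} [Fintype I] [NormedAddCommGroup E] [NormedSpace ℝ E]

noncomputable def gibbsBarycenter (f : E → ℝ) (x : I → E) (t : ℝ) : E :=
  (∑ i, Real.exp (-f (x i) / t))⁻¹ • ∑ i, Real.exp (-f (x i) / t) • x i

theorem gibbsBarycenter_sub_const (f : E → ℝ) (a : ℝ) (x : I → E) (t : ℝ) :
    gibbsBarycenter (fun p => f p - a) x t = gibbsBarycenter f x t := by
  have hfactor :
      ∀ i, Real.exp (-(f (x i) - a) / t) = Real.exp (a / t) * Real.exp (-f (x i) / t) :=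
    fun i => by rw [← Real.exp_add]; ring_nf
  simp only [gibbsBarycenter, hfactor, ← Finset.mul_sum, ← smul_smul, ← Finset.smul_sum, mul_inv]
  rw [smul_comm (∑ i, Real.exp (-f (x i) / t))⁻¹, inv_smul_smul₀ (Real.exp_ne_zero _)]

theorem tendsto_gibbsBarycenter_nhdsGT_zero (f : E → ℝ) (x : I → E) (i0 : I)
    (h : ∀ i, x i = x i0 ∨ f (x i0) < f (x i)) :
    Tendsto (gibbsBarycenter f x) (𝓝[>] 0) (𝓝 (x i0)) := by
  classical
  set L : I → ℝ := fun i => if x i = x i0 then 1 else 0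
  have hw : ∀ i, Tendsto (fun t => Real.exp (-(f (x i) - f (x i0)) / t)) (𝓝[>] 0) (𝓝 (L i)) := by
    intro i
    rcases h i with hi | hi
    · simp [L, hi]
    · have hne : x i ≠ x i0 := fun he => (he ▸ hi).false
      simpa [L, hne] using tendsto_exp_neg_div_nhdsGT_zero (sub_pos.2 hi)
  have hL : ∑ i, L i ≠ 0 :=
    (Finset.sum_pos' (fun i _ => by positivity) ⟨i0, Finset.mem_univ _, by simp [L]⟩).ne'
  have hlim := Tendsto.inv_sum_smul_sum hw hL x
  rw [inv_sum_smul_sum_eq_of_support (fun i hi => by simpa [L] using hi) hL] at hlim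
  rw [← funext (gibbsBarycenter_sub_const f (f (x i0)) x)]
  exact hlim

end GibbsBarycenter

theorem statement11_general {n : ℕ} {I : Type*} [Fintype I]
    (x : I → EuclideanSpace ℝ (Fin n)) (y : EuclideanSpace ℝ (Fin n)) (i0 : I)
    (h : ∀ i, x i = x i0 ∨ ‖y - x i0‖ < ‖y - x i‖) :
    Filter.Tendsto
      (fun ε : ℝ =>
        (∑ i, Real.exp (-‖y - x i‖ ^ 2 / (2 * ε)))⁻¹ •
          ∑ i, Real.exp (-‖y - x i‖ ^ 2 / (2 * ε)) • x i)
      (nhdsWithin 0 (Set.Ioi 0)) (nhds (x i0)) := by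
  have hsq : ∀ i, x i = x i0 ∨ ‖y - x i0‖ ^ 2 < ‖y - x i‖ ^ 2 := fun i =>
    (h i).imp_right fun hi => pow_lt_pow_left₀ hi (norm_nonneg _) two_ne_zero
  have hdouble : Tendsto (fun ε : ℝ => 2 * ε) (𝓝[>] 0) (𝓝[>] 0) :=
    tendsto_iff_comap.2 (comap_mulLeft_nhdsGT_zero two_pos).ge
  exact (tendsto_gibbsBarycenter_nhdsGT_zero (fun p => ‖y - p‖ ^ 2) x i0 hsq).comp hdouble

/-- Laplace principle. Let `(x i)` be a finite nonempty family of points of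
`ℝ^n` and `y ∈ ℝ^n`. If the closest point of the family to `y` is unique as a point (witnessed
by the index `i0`), then the Gaussian-softmax-weighted barycenter
`(∑ i, exp(−‖y−x i‖²/(2ε)))⁻¹ • ∑ i, exp(−‖y−x i‖²/(2ε)) • x i`
converges to `x i0` as `ε → 0⁺`. -/
theorem statement11 {n : ℕ} {I : Type*} [Fintype I] [Nonempty I]
    (x : I → EuclideanSpace ℝ (Fin n)) (y : EuclideanSpace ℝ (Fin n)) (i0 : I)
    (h : ∀ i, x i = x i0 ∨ ‖y - x i0‖ < ‖y - x i‖) :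
    Filter.Tendsto
      (fun ε : ℝ =>
        (∑ i, Real.exp (-‖y - x i‖ ^ 2 / (2 * ε)))⁻¹ •
          ∑ i, Real.exp (-‖y - x i‖ ^ 2 / (2 * ε)) • x i)
      (nhdsWithin 0 (Set.Ioi 0)) (nhds (x i0)) :=
  statement11_general x y i0 h
end

section
/- Let H be a real Hilbert space, r > 0, and let S be a finite nonempty subset of the sphere {x ∈ H : ‖x‖ = r}. For y ∈ H, let ι_S^*(y) := max_{x∈S} ⟨x, y⟩ be the support function of S and let Proj_S(y) := {x ∈ S : ‖y−x‖ = min_{x'∈S} ‖y−x'‖} be the set of closest points of S to y. Then the convex subdifferential of ι_S^* at y, i.e. the set {z ∈ H : ι_S^*(y') ≥ ι_S^*(y) + ⟨z, y'−y⟩ for all y' ∈ H}, equals the convex hull of Proj_S(y). -/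
/-!
Near `y`, only the maximizers of `⟪·, y⟫` on `S` matter for `ι_S^*`: for small `t > 0`,
`ι_S^*(y + t v) ≤ ι_S^*(y) + t · max_{x ∈ argmax} ⟪x, v⟫`. Hence every subgradient `z` satisfies
`⟪z, v⟫ ≤ max_{x ∈ argmax} ⟪x, v⟫` for all `v`, and the nearest-point projection of `z` onto the
(compact) convex hull of the maximizers shows that `z` lies in that hull. Conversely the
subdifferential is convex and contains every maximizer. On a sphere centred at the origin,
`‖y - x‖² = ‖y‖² - 2⟪x, y⟫ + r²`, so the maximizers are exactly the closest points.
-/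

open scoped Classical RealInnerProductSpace

noncomputable section

variable {H : Type*} [NormedAddCommGroup H] [InnerProductSpace ℝ H]

/-- `dist(y,S) = min_{x∈S} ‖y−x‖` (as the infimum of a finite nonempty set of reals). -/
def distS (S : Finset H) (y : H) : ℝ :=
  sInf ((fun x => ‖y - x‖) '' ↑S)

/-- `Proj_S(y)`, the set of closest points of `S` to `y`. -/
def ProjS (S : Finset H) (y : H) : Finset H :=
  S.filter fun x => ‖y - x‖ = distS S y

/-- The support function `ι_S^*(y) = max_{x∈S} ⟪x, y⟫` of a finite nonempty set. -/
def suppFn (S : Finset H) (hS : S.Nonempty) (y : H) : ℝ :=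
  S.sup' hS fun x => ⟪x, y⟫

open Filter Topology

def subdifferential (f : H → ℝ) (y : H) : Set H :=
  {z | ∀ y', f y + ⟪z, y' - y⟫ ≤ f y'}

theorem convex_subdifferential (f : H → ℝ) (y : H) : Convex ℝ (subdifferential f y) := by
  intro z₁ hz₁ z₂ hz₂ a b ha hb hab y'
  have h₁ := mul_le_mul_of_nonneg_left (hz₁ y') ha
  have h₂ := mul_le_mul_of_nonneg_left (hz₂ y') hb
  rw [inner_add_left, real_inner_smul_left, real_inner_smul_left]
  linear_combination h₁ + h₂ + (f y' - f y) * hab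

def suppArgmax (S : Finset H) (hS : S.Nonempty) (y : H) : Finset H :=
  S.filter fun x => ⟪x, y⟫ = suppFn S hS y

section SuppFn

variable {S : Finset H} {hS : S.Nonempty} {x y : H}

theorem inner_le_suppFn (hx : x ∈ S) (y : H) : ⟪x, y⟫ ≤ suppFn S hS y :=
  Finset.le_sup' (fun x => ⟪x, y⟫) hx

theorem mem_suppArgmax : x ∈ suppArgmax S hS y ↔ x ∈ S ∧ ⟪x, y⟫ = suppFn S hS y :=
  Finset.mem_filter

theorem suppArgmax_nonempty (hS : S.Nonempty) (y : H) : (suppArgmax S hS y).Nonempty := by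
  obtain ⟨x, hx, hmax⟩ := Finset.exists_mem_eq_sup' hS fun x => ⟪x, y⟫
  exact ⟨x, mem_suppArgmax.2 ⟨hx, hmax.symm⟩⟩

theorem suppArgmax_subset_subdifferential :
    (suppArgmax S hS y : Set H) ⊆ subdifferential (suppFn S hS) y := by
  intro x hx y'
  obtain ⟨hxS, hxy⟩ := mem_suppArgmax.1 hx
  rw [inner_sub_right, hxy]
  linarith [inner_le_suppFn (hS := hS) hxS y']

/-- Non-maximizers stay strictly below `ι_S^*` for small `t` by continuity, so only the
maximizers bound the growth of `ι_S^*` in the direction `v`. -/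
theorem eventually_suppFn_add_smul_le {v : H} {c : ℝ}
    (hc : ∀ x ∈ suppArgmax S hS y, ⟪x, v⟫ ≤ c) :
    ∀ᶠ t in 𝓝[>] (0 : ℝ), suppFn S hS (y + t • v) ≤ suppFn S hS y + t * c := by
  have hx : ∀ x ∈ S, ∀ᶠ t in 𝓝[>] (0 : ℝ), ⟪x, y⟫ + t * ⟪x, v⟫ ≤ suppFn S hS y + t * c := by
    intro x hxS
    by_cases hxA : x ∈ suppArgmax S hS y
    · filter_upwards [self_mem_nhdsWithin] with t (ht : 0 < t)
      rw [(mem_suppArgmax.1 hxA).2]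
      gcongr
      exact hc x hxA
    · have hlt : ⟪x, y⟫ < suppFn S hS y :=
        (inner_le_suppFn hxS y).lt_of_ne fun h => hxA (mem_suppArgmax.2 ⟨hxS, h⟩)
      refine nhdsWithin_le_nhds (Tendsto.eventually_lt ?_ ?_ hlt |>.mono fun _ => le_of_lt)
      · simpa using (continuous_const.add (continuous_id.mul continuous_const)).tendsto
          (f := fun t : ℝ => ⟪x, y⟫ + t * ⟪x, v⟫) 0
      · simpa using (continuous_const.add (continuous_id.mul continuous_const)).tendsto
          (f := fun t : ℝ => suppFn S hS y + t * c) 0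
  filter_upwards [(eventually_all_finset S).2 hx] with t ht
  refine Finset.sup'_le _ _ fun x hxS => ?_
  simpa only [inner_add_right, real_inner_smul_right] using ht x hxS

theorem exists_mem_suppArgmax_inner_le {z : H} (hz : z ∈ subdifferential (suppFn S hS) y)
    (v : H) : ∃ x ∈ suppArgmax S hS y, ⟪z, v⟫ ≤ ⟪x, v⟫ := by
  obtain ⟨x, hx, hmax⟩ :=
    Finset.exists_max_image (suppArgmax S hS y) (fun x => ⟪x, v⟫) (suppArgmax_nonempty hS y)
  obtain ⟨t, hle, ht⟩ :=
    ((eventually_suppFn_add_smul_le hmax).and self_mem_nhdsWithin).exists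
  have hsub := hz (y + t • v)
  rw [add_sub_cancel_left, real_inner_smul_right] at hsub
  exact ⟨x, hx, le_of_mul_le_mul_left (by linarith) ht⟩

end SuppFn

/-- Apply the hypothesis to `v = z - p`, where `p` is the point of `K` nearest to `z`. -/
theorem mem_of_forall_exists_inner_le {K : Set H} (hK : IsComplete K) (hKc : Convex ℝ K)
    {z : H} (h : ∀ v, ∃ x ∈ K, ⟪z, v⟫ ≤ ⟪x, v⟫) : z ∈ K := by
  obtain ⟨x₀, hx₀, -⟩ := h 0
  obtain ⟨p, hp, hmin⟩ := exists_norm_eq_iInf_of_complete_convex ⟨x₀, hx₀⟩ hK hKc z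
  have hobtuse := (norm_eq_iInf_iff_real_inner_le_zero hKc hp).1 hmin
  obtain ⟨x, hx, hzx⟩ := h (z - p)
  have hxp := hobtuse x hx
  have hzp : ⟪z - p, z - p⟫ ≤ 0 := by
    rw [real_inner_comm, inner_sub_left] at hxp
    rw [inner_sub_left]
    linarith
  rwa [sub_eq_zero.1 (real_inner_self_nonpos.1 hzp)]

theorem subdifferential_suppFn (S : Finset H) (hS : S.Nonempty) (y : H) :
    subdifferential (suppFn S hS) y = convexHull ℝ ↑(suppArgmax S hS y) := by
  refine subset_antisymm (fun z hz => ?_)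
    (convexHull_min suppArgmax_subset_subdifferential (convex_subdifferential _ _))
  refine mem_of_forall_exists_inner_le ((Finset.finite_toSet _).isCompact_convexHull ℝ).isComplete
    (convex_convexHull ℝ _) fun v => ?_
  obtain ⟨x, hx, hle⟩ := exists_mem_suppArgmax_inner_le hz v
  exact ⟨x, subset_convexHull ℝ _ hx, hle⟩

theorem norm_sub_le_norm_sub_iff_inner_le {x x' : H} (h : ‖x‖ = ‖x'‖) (y : H) :
    ‖y - x‖ ≤ ‖y - x'‖ ↔ ⟪x', y⟫ ≤ ⟪x, y⟫ := by
  rw [← sq_le_sq₀ (norm_nonneg _) (norm_nonneg _), norm_sub_sq_real, norm_sub_sq_real, h,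
    real_inner_comm y x, real_inner_comm y x']
  constructor <;> intro <;> linarith

theorem ProjS_eq_suppArgmax {r : ℝ} {S : Finset H} (hS : S.Nonempty)
    (hnorm : ∀ x ∈ S, ‖x‖ = r) (y : H) : ProjS S y = suppArgmax S hS y := by
  have hdist : distS S y = S.inf' hS fun x => ‖y - x‖ := (Finset.inf'_eq_csInf_image ..).symm
  ext x
  simp only [ProjS, suppArgmax, Finset.mem_filter, and_congr_right_iff]
  intro hx
  rw [hdist, le_antisymm_iff, suppFn, le_antisymm_iff, Finset.le_inf'_iff, Finset.sup'_le_iff]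
  simp only [Finset.inf'_le _ hx, Finset.le_sup' (fun x => ⟪x, y⟫) hx, and_true, true_and]
  exact forall₂_congr fun x' hx' =>
    norm_sub_le_norm_sub_iff_inner_le ((hnorm x hx).trans (hnorm x' hx').symm) y

theorem statement12_general (r : ℝ)
    (S : Finset H) (hS : S.Nonempty) (hnorm : ∀ x ∈ S, ‖x‖ = r) (y : H) :
    {z : H | ∀ y' : H, suppFn S hS y' ≥ suppFn S hS y + ⟪z, y' - y⟫}
      = convexHull ℝ ↑(ProjS S y) := by
  rw [ProjS_eq_suppArgmax hS hnorm]
  exact subdifferential_suppFn S hS y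

/-- from the proof of Proposition C.3 of the paper. Let `H` be a real
Hilbert space and `S` a finite nonempty subset of the sphere of radius `r > 0` centered at
the origin. Then the convex subdifferential of the support function `ι_S^*` at `y` equals the
convex hull of the set `Proj_S(y)` of closest points of `S` to `y`. -/
theorem statement12 [CompleteSpace H] (r : ℝ) (hr : 0 < r)
    (S : Finset H) (hS : S.Nonempty) (hnorm : ∀ x ∈ S, ‖x‖ = r) (y : H) :
    {z : H | ∀ y' : H, suppFn S hS y' ≥ suppFn S hS y + ⟪z, y' - y⟫}
      = convexHull ℝ ↑(ProjS S y) :=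
  statement12_general r S hS hnorm y

end
end

section
/- Let ε > 0, let t_0 < t_1 be real numbers, let U : ℝ^n → ℝ and V : [t_0,t_1] × ℝ^n → ℝ be smooth, and set A^m φ := ( −∇U·∇φ + ε Δφ )/2 (spatial derivatives). Let f, g : [t_0,t_1] × ℝ^n → (0,∞) be smooth and satisfy the parabolic equations −∂_t f + A^m f + (V/ε) f = 0 and ∂_t g + A^m g + (V/ε) g = 0. Define m := exp(−U/ε), q := f g m, θ := (ε/2)(log g − log f), and ℓ := f g = q/m. Then on [t_0,t_1] × ℝ^n: (i) ∂_t q + ∇·( q ∇θ ) = 0 (continuity equation), and (ii) ∂_t θ + ‖∇θ‖²/2 + V − ε² Q(q|m) = 0 (Hamilton–Jacobi equation), where Q(q|m) := −∇log√m · ∇log√ℓ − Δ√ℓ/(2√ℓ). -/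
open scoped BigOperators RealInnerProductSpace
noncomputable section

/-- The divergence `∇·v` of a vector field `v` on `ℝ^n`. -/
def divg {n : ℕ} (v : EuclideanSpace ℝ (Fin n) → EuclideanSpace ℝ (Fin n))
    (y : EuclideanSpace ℝ (Fin n)) : ℝ :=
  ∑ j, fderiv ℝ v y (EuclideanSpace.single j 1) j

variable {n : ℕ}

lemma inner_grad (A : EuclideanSpace ℝ (Fin n) → ℝ) (y v : EuclideanSpace ℝ (Fin n)) :
    ⟪gradient A y, v⟫ = fderiv ℝ A y v := by
  simp [gradient, InnerProductSpace.toDual_symm_apply]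

lemma grad_apply (A : EuclideanSpace ℝ (Fin n) → ℝ) (y : EuclideanSpace ℝ (Fin n)) (j : Fin n) :
    gradient A y j = fderiv ℝ A y (EuclideanSpace.single j 1) := by
  rw [← inner_grad, EuclideanSpace.inner_single_right]
  simp

lemma inner_grad_grad (A B : EuclideanSpace ℝ (Fin n) → ℝ) (y : EuclideanSpace ℝ (Fin n)) :
    ⟪gradient A y, gradient B y⟫
      = ∑ j, fderiv ℝ A y (EuclideanSpace.single j 1) * fderiv ℝ B y (EuclideanSpace.single j 1) := by
  rw [PiLp.inner_apply]
  exact Finset.sum_congr rfl fun j _ => by simp [grad_apply, RCLike.inner_apply, mul_comm]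

lemma norm_grad_sq (A : EuclideanSpace ℝ (Fin n) → ℝ) (y : EuclideanSpace ℝ (Fin n)) :
    ‖gradient A y‖ ^ 2 = ∑ j, fderiv ℝ A y (EuclideanSpace.single j 1) ^ 2 := by
  rw [← real_inner_self_eq_norm_sq, inner_grad_grad]
  exact Finset.sum_congr rfl fun j _ => (sq _).symm

lemma divg_eq_sum (v : EuclideanSpace ℝ (Fin n) → EuclideanSpace ℝ (Fin n))
    (y : EuclideanSpace ℝ (Fin n)) (hv : DifferentiableAt ℝ v y) :
    divg v y = ∑ j, fderiv ℝ (fun z => v z j) y (EuclideanSpace.single j 1) := by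
  refine Finset.sum_congr rfl fun j _ => ?_
  have h : fderiv ℝ (fun z => v z j) y
      = (EuclideanSpace.proj j (𝕜 := ℝ)).comp (fderiv ℝ v y) := by
    have := ((EuclideanSpace.proj j (𝕜 := ℝ)).hasFDerivAt.comp y hv.hasFDerivAt).fderiv
    exact this
  rw [h]; rfl


section Toolkit
variable {E : Type*} [NormedAddCommGroup E] [NormedSpace ℝ E] {A B : E → ℝ} {y v : E}

lemma pd_add (hA : DifferentiableAt ℝ A y) (hB : DifferentiableAt ℝ B y) :
    fderiv ℝ (fun z => A z + B z) y v = fderiv ℝ A y v + fderiv ℝ B y v := by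
  rw [fderiv_fun_add hA hB]; rfl

lemma pd_sub (hA : DifferentiableAt ℝ A y) (hB : DifferentiableAt ℝ B y) :
    fderiv ℝ (fun z => A z - B z) y v = fderiv ℝ A y v - fderiv ℝ B y v := by
  rw [fderiv_fun_sub hA hB]; rfl

lemma pd_mul (hA : DifferentiableAt ℝ A y) (hB : DifferentiableAt ℝ B y) :
    fderiv ℝ (fun z => A z * B z) y v = fderiv ℝ A y v * B y + A y * fderiv ℝ B y v := by
  rw [fderiv_fun_mul hA hB]; simp [mul_comm]; ring

lemma pd_const_mul (hA : DifferentiableAt ℝ A y) (c : ℝ) :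
    fderiv ℝ (fun z => c * A z) y v = c * fderiv ℝ A y v := by
  rw [fderiv_const_mul hA]; rfl

lemma pd_neg (hA : DifferentiableAt ℝ A y) :
    fderiv ℝ (fun z => -A z) y v = -fderiv ℝ A y v := by
  rw [fderiv_fun_neg]; rfl

lemma pd_div_const (hA : DifferentiableAt ℝ A y) (c : ℝ) :
    fderiv ℝ (fun z => A z / c) y v = fderiv ℝ A y v / c := by
  simp only [div_eq_mul_inv, fderiv_mul_const hA]
  simp [mul_comm]

lemma pd_log (hA : DifferentiableAt ℝ A y) (h : A y ≠ 0) :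
    fderiv ℝ (fun z => Real.log (A z)) y v = fderiv ℝ A y v / A y := by
  rw [(hA.hasFDerivAt.log h).fderiv]; simp [div_eq_inv_mul]

lemma pd_exp (hA : DifferentiableAt ℝ A y) :
    fderiv ℝ (fun z => Real.exp (A z)) y v = Real.exp (A y) * fderiv ℝ A y v := by
  rw [(hA.hasFDerivAt.exp).fderiv]; simp

lemma pd_sqrt (hA : DifferentiableAt ℝ A y) (h : A y ≠ 0) :
    fderiv ℝ (fun z => Real.sqrt (A z)) y v = fderiv ℝ A y v / (2 * Real.sqrt (A y)) := by
  rw [(hA.hasFDerivAt.sqrt h).fderiv]; simp [div_eq_inv_mul]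

lemma pd_inv (hA : DifferentiableAt ℝ A y) (h : A y ≠ 0) :
    fderiv ℝ (fun z => (A z)⁻¹) y v = -fderiv ℝ A y v / (A y) ^ 2 := by
  have h1 : HasFDerivAt (fun z => (A z)⁻¹)
      ((-ContinuousLinearMap.mulLeftRight ℝ ℝ (A y)⁻¹ (A y)⁻¹).comp (fderiv ℝ A y)) y := by
    exact (hasFDerivAt_inv' (𝕜 := ℝ) h).comp y hA.hasFDerivAt
  rw [h1.fderiv]
  simp only [ContinuousLinearMap.comp_apply, ContinuousLinearMap.neg_apply,
    ContinuousLinearMap.mulLeftRight_apply]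
  rw [neg_div, ← neg_inj, neg_neg, neg_neg, eq_div_iff (pow_ne_zero 2 h), pow_two,
    show (A y)⁻¹ * (fderiv ℝ A y) v * (A y)⁻¹ * (A y * A y)
      = (fderiv ℝ A y) v * (((A y)⁻¹ * A y) * ((A y)⁻¹ * A y)) from by ring,
    inv_mul_cancel₀ h]
  ring

lemma pd_div (hA : DifferentiableAt ℝ A y) (hB : DifferentiableAt ℝ B y) (h : B y ≠ 0) :
    fderiv ℝ (fun z => A z / B z) y v
      = (fderiv ℝ A y v * B y - A y * fderiv ℝ B y v) / (B y) ^ 2 := by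
  have : (fun z => A z / B z) = fun z => A z * (B z)⁻¹ := by
    funext z; rw [div_eq_mul_inv]
  rw [this, pd_mul (B := fun z => (B z)⁻¹) hA (hB.inv h), pd_inv hB h]
  field_simp
  ring

lemma diffAt_div (hA : DifferentiableAt ℝ A y) (hB : DifferentiableAt ℝ B y) (h : B y ≠ 0) :
    DifferentiableAt ℝ (fun z => A z / B z) y := by
  have : (fun z => A z / B z) = fun z => A z * (B z)⁻¹ := by
    funext z; rw [div_eq_mul_inv]
  rw [this]; exact hA.mul (hB.inv h)

end Toolkit
section Spatial
variable {n : ℕ}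

lemma cont_spatial (ε : ℝ) (hε : 0 < ε) (U F G : EuclideanSpace ℝ (Fin n) → ℝ)
    (hU : ContDiff ℝ 2 U) (hF : ContDiff ℝ 2 F) (hG : ContDiff ℝ 2 G)
    (hFp : ∀ z, 0 < F z) (hGp : ∀ z, 0 < G z) (y : EuclideanSpace ℝ (Fin n)) :
    divg (fun z => (F z * G z * Real.exp (-U z / ε)) •
        gradient (fun w => ε / 2 * (Real.log (G w) - Real.log (F w))) z) y
      = ∑ j, (((fderiv ℝ F y (EuclideanSpace.single j 1) * G y
              + F y * fderiv ℝ G y (EuclideanSpace.single j 1)) * Real.exp (-U y / ε)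
            + F y * G y * (Real.exp (-U y / ε) * (-fderiv ℝ U y (EuclideanSpace.single j 1) / ε)))
          * (ε / 2 * (fderiv ℝ G y (EuclideanSpace.single j 1) / G y
              - fderiv ℝ F y (EuclideanSpace.single j 1) / F y))
        + (F y * G y * Real.exp (-U y / ε))
          * (ε / 2 * ((fderiv ℝ (fun z => fderiv ℝ G z (EuclideanSpace.single j 1)) y
                  (EuclideanSpace.single j 1) * G y
                - fderiv ℝ G y (EuclideanSpace.single j 1) * fderiv ℝ G y (EuclideanSpace.single j 1)) / G y ^ 2
              - (fderiv ℝ (fun z => fderiv ℝ F z (EuclideanSpace.single j 1)) y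
                  (EuclideanSpace.single j 1) * F y
                - fderiv ℝ F y (EuclideanSpace.single j 1) * fderiv ℝ F y (EuclideanSpace.single j 1)) / F y ^ 2))) := by
  have hFd : Differentiable ℝ F := hF.differentiable two_ne_zero
  have hGd : Differentiable ℝ G := hG.differentiable two_ne_zero
  have hUd : Differentiable ℝ U := hU.differentiable two_ne_zero
  have fne : ∀ z, F z ≠ 0 := fun z => (hFp z).ne'
  have gne : ∀ z, G z ≠ 0 := fun z => (hGp z).ne'
  have hMd : Differentiable ℝ (fun z => Real.exp (-U z / ε)) := by fun_prop
  have hqd : Differentiable ℝ (fun z => F z * G z * Real.exp (-U z / ε)) := (hFd.mul hGd).mul hMd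
  have hθ2 : ContDiff ℝ 2 (fun w => ε / 2 * (Real.log (G w) - Real.log (F w))) :=
    contDiff_const.mul ((hG.log gne).sub (hF.log fne))
  have hθ'1 : ContDiff ℝ 1 (fderiv ℝ (fun w => ε / 2 * (Real.log (G w) - Real.log (F w)))) :=
    hθ2.fderiv_right (by norm_num)
  have hvd : DifferentiableAt ℝ (fun z => (F z * G z * Real.exp (-U z / ε)) •
      gradient (fun w => ε / 2 * (Real.log (G w) - Real.log (F w))) z) y := by
    exact (hqd y).smul
      (((InnerProductSpace.toDual ℝ _).symm.contDiff.comp hθ'1).differentiable one_ne_zero y)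
  rw [divg_eq_sum _ y hvd]
  refine Finset.sum_congr rfl fun j _ => ?_
  have hDGd : ContDiff ℝ 1 (fun z => fderiv ℝ G z (EuclideanSpace.single j 1)) :=
    (hG.fderiv_right (by norm_num)).clm_apply contDiff_const
  have hDFd : ContDiff ℝ 1 (fun z => fderiv ℝ F z (EuclideanSpace.single j 1)) :=
    (hF.fderiv_right (by norm_num)).clm_apply contDiff_const
  have pdθ : ∀ (z w : EuclideanSpace ℝ (Fin n)),
      fderiv ℝ (fun w => ε / 2 * (Real.log (G w) - Real.log (F w))) z w
        = ε / 2 * (fderiv ℝ G z w / G z - fderiv ℝ F z w / F z) := by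
    intro z w
    rw [pd_const_mul (((hGd z).log (gne z)).fun_sub ((hFd z).log (fne z))),
      pd_sub ((hGd z).log (gne z)) ((hFd z).log (fne z)), pd_log (hGd z) (gne z),
      pd_log (hFd z) (fne z)]
  have hcoord : (fun z => ((F z * G z * Real.exp (-U z / ε)) •
        gradient (fun w => ε / 2 * (Real.log (G w) - Real.log (F w))) z) j)
      = fun z => (F z * G z * Real.exp (-U z / ε)) *
          (ε / 2 * (fderiv ℝ G z (EuclideanSpace.single j 1) / G z
            - fderiv ℝ F z (EuclideanSpace.single j 1) / F z)) := by
    funext z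
    show (F z * G z * Real.exp (-U z / ε)) *
      (gradient (fun w => ε / 2 * (Real.log (G w) - Real.log (F w))) z j) = _
    rw [grad_apply, pdθ]
  rw [hcoord]
  have hΘd : DifferentiableAt ℝ (fun z => ε / 2 *
      (fderiv ℝ G z (EuclideanSpace.single j 1) / G z
        - fderiv ℝ F z (EuclideanSpace.single j 1) / F z)) y :=
    DifferentiableAt.const_mul
      (((diffAt_div (hDGd.differentiable one_ne_zero y) (hGd y) (gne y))).sub
        ((diffAt_div (hDFd.differentiable one_ne_zero y) (hFd y) (fne y)))) _
  rw [pd_mul (hqd y) hΘd, pd_mul ((hFd y).fun_mul (hGd y)) (hMd y), pd_mul (hFd y) (hGd y),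
    pd_exp (show DifferentiableAt ℝ (fun z => -U z / ε) y from by fun_prop),
    pd_div_const (show DifferentiableAt ℝ (fun z => -U z) y from (hUd y).neg), pd_neg (hUd y),
    pd_const_mul ((diffAt_div (hDGd.differentiable one_ne_zero y) (hGd y) (gne y)).fun_sub
      (diffAt_div (hDFd.differentiable one_ne_zero y) (hFd y) (fne y))),
    pd_sub (diffAt_div (hDGd.differentiable one_ne_zero y) (hGd y) (gne y))
      (diffAt_div (hDFd.differentiable one_ne_zero y) (hFd y) (fne y)),
    pd_div (hDGd.differentiable one_ne_zero y) (hGd y) (gne y),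
    pd_div (hDFd.differentiable one_ne_zero y) (hFd y) (fne y)]

end Spatial
section HJ
variable {n : ℕ}

lemma pd_theta (ε : ℝ) (F G : EuclideanSpace ℝ (Fin n) → ℝ)
    (hF : ContDiff ℝ 2 F) (hG : ContDiff ℝ 2 G)
    (hFp : ∀ z, 0 < F z) (hGp : ∀ z, 0 < G z) (z w : EuclideanSpace ℝ (Fin n)) :
    fderiv ℝ (fun w => ε / 2 * (Real.log (G w) - Real.log (F w))) z w
      = ε / 2 * (fderiv ℝ G z w / G z - fderiv ℝ F z w / F z) := by
  have hFd : Differentiable ℝ F := hF.differentiable two_ne_zero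
  have hGd : Differentiable ℝ G := hG.differentiable two_ne_zero
  rw [pd_const_mul (((hGd z).log (hGp z).ne').fun_sub ((hFd z).log (hFp z).ne')),
    pd_sub ((hGd z).log (hGp z).ne') ((hFd z).log (hFp z).ne'),
    pd_log (hGd z) (hGp z).ne', pd_log (hFd z) (hFp z).ne']

lemma norm_grad_theta (ε : ℝ) (F G : EuclideanSpace ℝ (Fin n) → ℝ)
    (hF : ContDiff ℝ 2 F) (hG : ContDiff ℝ 2 G)
    (hFp : ∀ z, 0 < F z) (hGp : ∀ z, 0 < G z) (y : EuclideanSpace ℝ (Fin n)) :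
    ‖gradient (fun w => ε / 2 * (Real.log (G w) - Real.log (F w))) y‖ ^ 2
      = ∑ j, (ε / 2 * (fderiv ℝ G y (EuclideanSpace.single j 1) / G y
          - fderiv ℝ F y (EuclideanSpace.single j 1) / F y)) ^ 2 := by
  rw [norm_grad_sq]
  exact Finset.sum_congr rfl fun j _ => by rw [pd_theta ε F G hF hG hFp hGp]

lemma inner_grad_logsqrt (ε : ℝ) (hε : 0 < ε) (U F G : EuclideanSpace ℝ (Fin n) → ℝ)
    (hU : ContDiff ℝ 2 U) (hF : ContDiff ℝ 2 F) (hG : ContDiff ℝ 2 G)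
    (hFp : ∀ z, 0 < F z) (hGp : ∀ z, 0 < G z) (y : EuclideanSpace ℝ (Fin n)) :
    ⟪gradient (fun z => Real.log (Real.sqrt (Real.exp (-U z / ε)))) y,
        gradient (fun z => Real.log (Real.sqrt (F z * G z))) y⟫
      = ∑ j, (-fderiv ℝ U y (EuclideanSpace.single j 1) / ε / 2)
          * ((fderiv ℝ F y (EuclideanSpace.single j 1) / F y
            + fderiv ℝ G y (EuclideanSpace.single j 1) / G y) / 2) := by
  have hFd : Differentiable ℝ F := hF.differentiable two_ne_zero
  have hGd : Differentiable ℝ G := hG.differentiable two_ne_zero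
  have hUd : Differentiable ℝ U := hU.differentiable two_ne_zero
  have h1 : (fun z => Real.log (Real.sqrt (Real.exp (-U z / ε)))) = fun z => -U z / ε / 2 := by
    funext z; rw [Real.log_sqrt (Real.exp_nonneg _), Real.log_exp]
  have h2 : (fun z => Real.log (Real.sqrt (F z * G z)))
      = fun z => (Real.log (F z) + Real.log (G z)) / 2 := by
    funext z
    rw [Real.log_sqrt (mul_pos (hFp z) (hGp z)).le,
      Real.log_mul (hFp z).ne' (hGp z).ne']
  rw [h1, h2, inner_grad_grad]
  refine Finset.sum_congr rfl fun j _ => ?_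
  rw [pd_div_const (show DifferentiableAt ℝ (fun z => -U z / ε) y from by fun_prop),
    pd_div_const (show DifferentiableAt ℝ (fun z => -U z) y from (hUd y).neg),
    pd_neg (hUd y),
    pd_div_const (((hFd y).log (hFp y).ne').fun_add ((hGd y).log (hGp y).ne')),
    pd_add ((hFd y).log (hFp y).ne') ((hGd y).log (hGp y).ne'),
    pd_log (hFd y) (hFp y).ne', pd_log (hGd y) (hGp y).ne']

lemma lap_sqrt_div (F G : EuclideanSpace ℝ (Fin n) → ℝ)
    (hF : ContDiff ℝ 2 F) (hG : ContDiff ℝ 2 G)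
    (hFp : ∀ z, 0 < F z) (hGp : ∀ z, 0 < G z) (y : EuclideanSpace ℝ (Fin n)) :
    lap (fun z => Real.sqrt (F z * G z)) y / (2 * Real.sqrt (F y * G y))
      = ∑ j, ((fderiv ℝ (fun z => fderiv ℝ F z (EuclideanSpace.single j 1)) y
              (EuclideanSpace.single j 1) * G y
            + 2 * (fderiv ℝ F y (EuclideanSpace.single j 1) * fderiv ℝ G y (EuclideanSpace.single j 1))
            + F y * fderiv ℝ (fun z => fderiv ℝ G z (EuclideanSpace.single j 1)) y
              (EuclideanSpace.single j 1)) / (4 * (F y * G y))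
          - (fderiv ℝ F y (EuclideanSpace.single j 1) * G y
            + F y * fderiv ℝ G y (EuclideanSpace.single j 1)) ^ 2 / (8 * (F y * G y) ^ 2)) := by
  have hFd : Differentiable ℝ F := hF.differentiable two_ne_zero
  have hGd : Differentiable ℝ G := hG.differentiable two_ne_zero
  have hLpos : ∀ z, 0 < F z * G z := fun z => mul_pos (hFp z) (hGp z)
  rw [lap, Finset.sum_div]
  refine Finset.sum_congr rfl fun j _ => ?_
  have hDGd : ContDiff ℝ 1 (fun z => fderiv ℝ G z (EuclideanSpace.single j 1)) :=
    (hG.fderiv_right (by norm_num)).clm_apply contDiff_const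
  have hDFd : ContDiff ℝ 1 (fun z => fderiv ℝ F z (EuclideanSpace.single j 1)) :=
    (hF.fderiv_right (by norm_num)).clm_apply contDiff_const
  have hinner : (fun z => fderiv ℝ (fun w => Real.sqrt (F w * G w)) z (EuclideanSpace.single j 1))
      = fun z => (fderiv ℝ F z (EuclideanSpace.single j 1) * G z
          + F z * fderiv ℝ G z (EuclideanSpace.single j 1)) / (2 * Real.sqrt (F z * G z)) := by
    funext z
    rw [pd_sqrt ((hFd z).fun_mul (hGd z)) (hLpos z).ne', pd_mul (hFd z) (hGd z)]
  rw [hinner]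
  have hNd : DifferentiableAt ℝ (fun z => fderiv ℝ F z (EuclideanSpace.single j 1) * G z
      + F z * fderiv ℝ G z (EuclideanSpace.single j 1)) y :=
    ((hDFd.differentiable one_ne_zero y).mul (hGd y)).add
      ((hFd y).mul (hDGd.differentiable one_ne_zero y))
  have hsd : DifferentiableAt ℝ (fun z => Real.sqrt (F z * G z)) y :=
    DifferentiableAt.sqrt ((hFd y).fun_mul (hGd y)) (hLpos y).ne'
  have hDd : DifferentiableAt ℝ (fun z => 2 * Real.sqrt (F z * G z)) y :=
    hsd.const_mul 2
  have hDne : 2 * Real.sqrt (F y * G y) ≠ 0 :=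
    mul_ne_zero two_ne_zero (Real.sqrt_ne_zero'.mpr (hLpos y))
  rw [pd_div hNd hDd hDne,
    pd_add ((hDFd.differentiable one_ne_zero y).fun_mul (hGd y)) ((hFd y).fun_mul (hDGd.differentiable one_ne_zero y)),
    pd_mul (hDFd.differentiable one_ne_zero y) (hGd y),
    pd_mul (hFd y) (hDGd.differentiable one_ne_zero y),
    pd_const_mul hsd, pd_sqrt ((hFd y).fun_mul (hGd y)) (hLpos y).ne',
    pd_mul (hFd y) (hGd y)]
  have hs2 : Real.sqrt (F y * G y) * Real.sqrt (F y * G y) = F y * G y :=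
    Real.mul_self_sqrt (hLpos y).le
  set s := Real.sqrt (F y * G y) with hsdef
  have hs : s ≠ 0 := Real.sqrt_ne_zero'.mpr (hLpos y)
  rw [show F y * G y = s * s from hs2.symm]
  field_simp
  ring

end HJ


lemma cont_perj (ε F G u M a b A B : ℝ) (hF : F ≠ 0) (hG : G ≠ 0) (hε : ε ≠ 0) :
    ((-(G) * M / 2) * (u * a) + ((F) * M / 2) * (u * b)
        + (ε * (G) * M / 2) * A + (-ε * (F) * M / 2) * B)
      + (((a * G + F * b) * M + F * G * (M * (-u / ε))) * (ε / 2 * (b / G - a / F))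
        + (F * G * M) * (ε / 2 * ((B * G - b * b) / G ^ 2 - (A * F - a * a) / F ^ 2))) = 0 := by
  field_simp
  ring

lemma hj_perj (ε F G u a b A B : ℝ) (hF : F ≠ 0) (hG : G ≠ 0) (hε : ε ≠ 0) :
    ((ε / (4 * (F))) * (u * a) + (ε / (4 * (G))) * (u * b)
        + (-(ε ^ 2) / (4 * (F))) * A + (-(ε ^ 2) / (4 * (G))) * B)
      + ((ε / 2 * (b / G - a / F)) ^ 2 / 2
        + (ε ^ 2 * (-u / ε / 2 * ((a / F + b / G) / 2))
          + ε ^ 2 * ((A * G + 2 * (a * b) + F * B) / (4 * (F * G))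
            - (a * G + F * b) ^ 2 / (8 * (F * G) ^ 2)))) = 0 := by
  field_simp
  ring

lemma sum_lin4 {n : ℕ} (a b c d : Fin n → ℝ) (p q r w : ℝ) :
    ∑ j, (p * a j + q * b j + r * c j + w * d j)
      = p * ∑ j, a j + q * ∑ j, b j + r * ∑ j, c j + w * ∑ j, d j := by
  simp [Finset.sum_add_distrib, Finset.mul_sum]

set_option maxHeartbeats 1000000 in
/-- Proposition 8.4 of the paper. Let `ε > 0`, `t0 < t1`, `U, V` smooth,
`A^m φ = (−∇U·∇φ + εΔφ)/2`, and `f, g` smooth positive solutions of the backward/forward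
parabolic equations `−∂_t f + A^m f + (V/ε) f = 0`, `∂_t g + A^m g + (V/ε) g = 0` on
`[t0,t1] × ℝ^n`. With `m = exp(−U/ε)`, `q = f g m`, `θ = (ε/2)(log g − log f)`, `ℓ = f g`,
one has on `[t0,t1] × ℝ^n` the continuity equation `∂_t q + ∇·(q ∇θ) = 0` and the
Hamilton–Jacobi equation `∂_t θ + ‖∇θ‖²/2 + V − ε² Q(q|m) = 0`, where
`Q(q|m) = −∇log√m · ∇log√ℓ − Δ√ℓ/(2√ℓ)`. -/
theorem statement16 {n : ℕ} (ε : ℝ) (hε : 0 < ε) (t0 t1 : ℝ) (ht : t0 < t1)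
    (U : EuclideanSpace ℝ (Fin n) → ℝ) (hU : ContDiff ℝ (⊤ : ℕ∞) U)
    (V f g : ℝ → EuclideanSpace ℝ (Fin n) → ℝ)
    (hV : ContDiffOn ℝ (⊤ : ℕ∞) (fun p : ℝ × EuclideanSpace ℝ (Fin n) => V p.1 p.2)
      (Set.Icc t0 t1 ×ˢ Set.univ))
    (hf : ContDiffOn ℝ (⊤ : ℕ∞) (fun p : ℝ × EuclideanSpace ℝ (Fin n) => f p.1 p.2)
      (Set.Icc t0 t1 ×ˢ Set.univ))
    (hg : ContDiffOn ℝ (⊤ : ℕ∞) (fun p : ℝ × EuclideanSpace ℝ (Fin n) => g p.1 p.2)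
      (Set.Icc t0 t1 ×ˢ Set.univ))
    (hfpos : ∀ t ∈ Set.Icc t0 t1, ∀ y, 0 < f t y)
    (hgpos : ∀ t ∈ Set.Icc t0 t1, ∀ y, 0 < g t y)
    (hfpde : ∀ t ∈ Set.Icc t0 t1, ∀ y,
      -derivWithin (fun s => f s y) (Set.Icc t0 t1) t
        + (-⟪gradient U y, gradient (f t) y⟫ + ε * lap (f t) y) / 2
        + (V t y / ε) * f t y = 0)
    (hgpde : ∀ t ∈ Set.Icc t0 t1, ∀ y,
      derivWithin (fun s => g s y) (Set.Icc t0 t1) t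
        + (-⟪gradient U y, gradient (g t) y⟫ + ε * lap (g t) y) / 2
        + (V t y / ε) * g t y = 0)
    (m : EuclideanSpace ℝ (Fin n) → ℝ) (hm : m = fun y => Real.exp (-U y / ε))
    (q θ ℓ : ℝ → EuclideanSpace ℝ (Fin n) → ℝ)
    (hq : q = fun t y => f t y * g t y * m y)
    (hθ : θ = fun t y => (ε / 2) * (Real.log (g t y) - Real.log (f t y)))
    (hℓ : ℓ = fun t y => f t y * g t y) :
    ∀ t ∈ Set.Icc t0 t1, ∀ y,
      (derivWithin (fun s => q s y) (Set.Icc t0 t1) t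
          + divg (fun z => q t z • gradient (θ t) z) y = 0)
      ∧ (derivWithin (fun s => θ s y) (Set.Icc t0 t1) t
          + ‖gradient (θ t) y‖ ^ 2 / 2 + V t y
          - ε ^ 2 * (-⟪gradient (fun z => Real.log (Real.sqrt (m z))) y,
                gradient (fun z => Real.log (Real.sqrt (ℓ t z))) y⟫
              - lap (fun z => Real.sqrt (ℓ t z)) y / (2 * Real.sqrt (ℓ t y))) = 0) := by
  subst hm hq hθ hℓ
  intro t htm y
  have hU2 : ContDiff ℝ 2 U := hU.of_le (WithTop.coe_le_coe.mpr le_top)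
  have hFt : ContDiff ℝ 2 (f t) := by
    have h1 := (hf.of_le (WithTop.coe_le_coe.mpr le_top : (2 : WithTop ℕ∞) ≤ ((⊤ : ℕ∞) : WithTop ℕ∞))).comp
      ((contDiff_const.prodMk contDiff_id).contDiffOn (s := Set.univ))
      (fun z _ => Set.mk_mem_prod htm (Set.mem_univ z))
    exact contDiffOn_univ.mp h1
  have hGt : ContDiff ℝ 2 (g t) := by
    have h1 := (hg.of_le (WithTop.coe_le_coe.mpr le_top : (2 : WithTop ℕ∞) ≤ ((⊤ : ℕ∞) : WithTop ℕ∞))).comp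
      ((contDiff_const.prodMk contDiff_id).contDiffOn (s := Set.univ))
      (fun z _ => Set.mk_mem_prod htm (Set.mem_univ z))
    exact contDiffOn_univ.mp h1
  have hfy : ContDiffOn ℝ 1 (fun s => f s y) (Set.Icc t0 t1) :=
    (hf.of_le (WithTop.coe_le_coe.mpr le_top : (1 : WithTop ℕ∞) ≤ ((⊤ : ℕ∞) : WithTop ℕ∞))).comp
      ((contDiff_id.prodMk contDiff_const).contDiffOn)
      (fun s hs => Set.mk_mem_prod hs (Set.mem_univ y))
  have hgy : ContDiffOn ℝ 1 (fun s => g s y) (Set.Icc t0 t1) :=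
    (hg.of_le (WithTop.coe_le_coe.mpr le_top : (1 : WithTop ℕ∞) ≤ ((⊤ : ℕ∞) : WithTop ℕ∞))).comp
      ((contDiff_id.prodMk contDiff_const).contDiffOn)
      (fun s hs => Set.mk_mem_prod hs (Set.mem_univ y))
  have hfdW : DifferentiableWithinAt ℝ (fun s => f s y) (Set.Icc t0 t1) t :=
    (hfy.differentiableOn one_ne_zero) t htm
  have hgdW : DifferentiableWithinAt ℝ (fun s => g s y) (Set.Icc t0 t1) t :=
    (hgy.differentiableOn one_ne_zero) t htm
  have hud : UniqueDiffWithinAt ℝ (Set.Icc t0 t1) t := uniqueDiffOn_Icc ht t htm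
  have hFp : ∀ z, 0 < f t z := hfpos t htm
  have hGp : ∀ z, 0 < g t z := hgpos t htm
  have Fne : f t y ≠ 0 := (hFp y).ne'
  have Gne : g t y ≠ 0 := (hGp y).ne'
  have hf' : derivWithin (fun s => f s y) (Set.Icc t0 t1) t
      = (-⟪gradient U y, gradient (f t) y⟫ + ε * lap (f t) y) / 2 + V t y / ε * f t y := by
    have h := hfpde t htm y; linarith
  have hg' : derivWithin (fun s => g s y) (Set.Icc t0 t1) t
      = -((-⟪gradient U y, gradient (g t) y⟫ + ε * lap (g t) y) / 2 + V t y / ε * g t y) := by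
    have h := hgpde t htm y; linarith
  constructor
  · -- continuity equation
    have hdq : derivWithin (fun s => f s y * g s y * Real.exp (-U y / ε)) (Set.Icc t0 t1) t
        = (derivWithin (fun s => f s y) (Set.Icc t0 t1) t * g t y
           + f t y * derivWithin (fun s => g s y) (Set.Icc t0 t1) t) * Real.exp (-U y / ε) := by
      rw [derivWithin_mul_const (hfdW.fun_mul hgdW), derivWithin_fun_mul hfdW hgdW]
    beta_reduce
    rw [hdq, hf', hg', cont_spatial ε hε U (f t) (g t) hU2 hFt hGt hFp hGp y,
      inner_grad_grad U (f t) y, inner_grad_grad U (g t) y]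
    simp only [lap]
    have hz : ∑ j, (((-(g t y) * Real.exp (-U y / ε) / 2) * (fderiv ℝ U y (EuclideanSpace.single j 1) * fderiv ℝ (f t) y (EuclideanSpace.single j 1)) + ((f t y) * Real.exp (-U y / ε) / 2) * (fderiv ℝ U y (EuclideanSpace.single j 1) * fderiv ℝ (g t) y (EuclideanSpace.single j 1)) + (ε * (g t y) * Real.exp (-U y / ε) / 2) * (fderiv ℝ (fun z => fderiv ℝ (f t) z (EuclideanSpace.single j 1)) y (EuclideanSpace.single j 1)) + (-ε * (f t y) * Real.exp (-U y / ε) / 2) * (fderiv ℝ (fun z => fderiv ℝ (g t) z (EuclideanSpace.single j 1)) y (EuclideanSpace.single j 1))) + (((fderiv ℝ (f t) y (EuclideanSpace.single j 1) * g t y + f t y * fderiv ℝ (g t) y (EuclideanSpace.single j 1)) * Real.exp (-U y / ε) + f t y * g t y * (Real.exp (-U y / ε) * (-fderiv ℝ U y (EuclideanSpace.single j 1) / ε))) * (ε / 2 * (fderiv ℝ (g t) y (EuclideanSpace.single j 1) / g t y - fderiv ℝ (f t) y (EuclideanSpace.single j 1) / f t y)) + (f t y * g t y * Real.exp (-U y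 / ε)) * (ε / 2 * ((fderiv ℝ (fun z => fderiv ℝ (g t) z (EuclideanSpace.single j 1)) y (EuclideanSpace.single j 1) * g t y - fderiv ℝ (g t) y (EuclideanSpace.single j 1) * fderiv ℝ (g t) y (EuclideanSpace.single j 1)) / g t y ^ 2 - (fderiv ℝ (fun z => fderiv ℝ (f t) z (EuclideanSpace.single j 1)) y (EuclideanSpace.single j 1) * f t y - fderiv ℝ (f t) y (EuclideanSpace.single j 1) * fderiv ℝ (f t) y (EuclideanSpace.single j 1)) / f t y ^ 2)))) = 0 := by
      refine Finset.sum_eq_zero fun j _ => ?_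
      exact cont_perj ε (f t y) (g t y) (fderiv ℝ U y (EuclideanSpace.single j 1))
        (Real.exp (-U y / ε)) (fderiv ℝ (f t) y (EuclideanSpace.single j 1))
        (fderiv ℝ (g t) y (EuclideanSpace.single j 1))
        (fderiv ℝ (fun z => fderiv ℝ (f t) z (EuclideanSpace.single j 1)) y (EuclideanSpace.single j 1))
        (fderiv ℝ (fun z => fderiv ℝ (g t) z (EuclideanSpace.single j 1)) y (EuclideanSpace.single j 1))
        Fne Gne hε.ne'
    have hs1 : ∑ j, (((-(g t y) * Real.exp (-U y / ε) / 2) * (fderiv ℝ U y (EuclideanSpace.single j 1) * fderiv ℝ (f t) y (EuclideanSpace.single j 1)) + ((f t y) * Real.exp (-U y / ε) / 2) * (fderiv ℝ U y (EuclideanSpace.single j 1) * fderiv ℝ (g t) y (EuclideanSpace.single j 1)) + (ε * (g t y) * Real.exp (-U y / ε) / 2) * (fderiv ℝ (fun z => fderiv ℝ (f t) z (EuclideanSpace.single j 1)) y (EuclideanSpace.single j 1)) + (-ε * (f t y) * Real.exp (-U y / ε) / 2) * (fderiv ℝ (fun z => fderiv ℝ (g t) z (EuclideanSpace.single j 1))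 y (EuclideanSpace.single j 1))) + (((fderiv ℝ (f t) y (EuclideanSpace.single j 1) * g t y + f t y * fderiv ℝ (g t) y (EuclideanSpace.single j 1)) * Real.exp (-U y / ε) + f t y * g t y * (Real.exp (-U y / ε) * (-fderiv ℝ U y (EuclideanSpace.single j 1) / ε))) * (ε / 2 * (fderiv ℝ (g t) y (EuclideanSpace.single j 1) / g t y - fderiv ℝ (f t) y (EuclideanSpace.single j 1) / f t y)) + (f t y * g t y * Real.exp (-U y / ε)) * (ε / 2 * ((fderiv ℝ (fun z => fderiv ℝ (g t) z (EuclideanSpace.single j 1)) y (EuclideanSpace.single j 1) * g t y - fderiv ℝ (g t) y (EuclideanSpace.single j 1) * fderiv ℝ (g t) y (EuclideanSpace.single j 1)) / g t y ^ 2 - (fderiv ℝ (fun z => fderiv ℝ (f t) z (EuclideanSpace.single j 1)) y (EuclideanSpace.single j 1) * f t y - fderiv ℝ (f t) y (EuclideanSpace.single j 1) * fderiv ℝ (f t) y (EuclideanSpace.single j 1)) / f t y ^ 2))))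
        = ∑ j, ((-(g t y) * Real.exp (-U y / ε) / 2) * (fderiv ℝ U y (EuclideanSpace.single j 1) * fderiv ℝ (f t) y (EuclideanSpace.single j 1)) + ((f t y) * Real.exp (-U y / ε) / 2) * (fderiv ℝ U y (EuclideanSpace.single j 1) * fderiv ℝ (g t) y (EuclideanSpace.single j 1)) + (ε * (g t y) * Real.exp (-U y / ε) / 2) * (fderiv ℝ (fun z => fderiv ℝ (f t) z (EuclideanSpace.single j 1)) y (EuclideanSpace.single j 1)) + (-ε * (f t y) * Real.exp (-U y / ε) / 2) * (fderiv ℝ (fun z => fderiv ℝ (g t) z (EuclideanSpace.single j 1)) y (EuclideanSpace.single j 1))) + ∑ j, (((fderiv ℝ (f t) y (EuclideanSpace.single j 1) * g t y + f t y * fderiv ℝ (g t) y (EuclideanSpace.single j 1)) * Real.exp (-U y / ε) + f t y * g t y * (Real.exp (-U y / ε) * (-fderiv ℝ U y (EuclideanSpace.single j 1) / ε))) * (ε / 2 * (fderiv ℝ (g t) y (EuclideanSpace.single j 1) / g t y - fderiv ℝ (f t) y (EuclideanSpace.single j 1) / f t y)) + (f t y * g t y * Real.exp (-U y / ε)) *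 (ε / 2 * ((fderiv ℝ (fun z => fderiv ℝ (g t) z (EuclideanSpace.single j 1)) y (EuclideanSpace.single j 1) * g t y - fderiv ℝ (g t) y (EuclideanSpace.single j 1) * fderiv ℝ (g t) y (EuclideanSpace.single j 1)) / g t y ^ 2 - (fderiv ℝ (fun z => fderiv ℝ (f t) z (EuclideanSpace.single j 1)) y (EuclideanSpace.single j 1) * f t y - fderiv ℝ (f t) y (EuclideanSpace.single j 1) * fderiv ℝ (f t) y (EuclideanSpace.single j 1)) / f t y ^ 2))) := Finset.sum_add_distrib
    have hphi : ∑ j, ((-(g t y) * Real.exp (-U y / ε) / 2) * (fderiv ℝ U y (EuclideanSpace.single j 1) * fderiv ℝ (f t) y (EuclideanSpace.single j 1)) + ((f t y) * Real.exp (-U y / ε) / 2) * (fderiv ℝ U y (EuclideanSpace.single j 1) * fderiv ℝ (g t) y (EuclideanSpace.single j 1)) + (ε * (g t y) * Real.exp (-U y / ε) / 2) * (fderiv ℝ (fun z => fderiv ℝ (f t) z (EuclideanSpace.single j 1)) y (EuclideanSpace.single j 1)) + (-ε * (f t y) * Real.exp (-U y / ε) / 2) * (fderiv ℝ (fun z =>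 fderiv ℝ (g t) z (EuclideanSpace.single j 1)) y (EuclideanSpace.single j 1)))
        = (-(g t y) * Real.exp (-U y / ε) / 2) * ∑ j, fderiv ℝ U y (EuclideanSpace.single j 1) * fderiv ℝ (f t) y (EuclideanSpace.single j 1)
          + ((f t y) * Real.exp (-U y / ε) / 2) * ∑ j, fderiv ℝ U y (EuclideanSpace.single j 1) * fderiv ℝ (g t) y (EuclideanSpace.single j 1)
          + (ε * (g t y) * Real.exp (-U y / ε) / 2) * ∑ j, fderiv ℝ (fun z => fderiv ℝ (f t) z (EuclideanSpace.single j 1)) y (EuclideanSpace.single j 1)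
          + (-ε * (f t y) * Real.exp (-U y / ε) / 2) * ∑ j, fderiv ℝ (fun z => fderiv ℝ (g t) z (EuclideanSpace.single j 1)) y (EuclideanSpace.single j 1) := by
      rw [sum_lin4]
    linear_combination hz - hs1 - hphi
  · -- Hamilton-Jacobi equation
    have hdθ : derivWithin (fun s => ε / 2 * (Real.log (g s y) - Real.log (f s y)))
          (Set.Icc t0 t1) t
        = ε / 2 * (derivWithin (fun s => g s y) (Set.Icc t0 t1) t / g t y
            - derivWithin (fun s => f s y) (Set.Icc t0 t1) t / f t y) :=
      (HasDerivWithinAt.const_mul (ε / 2)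
        ((hgdW.hasDerivWithinAt.log Gne).sub (hfdW.hasDerivWithinAt.log Fne))).derivWithin hud
    beta_reduce
    rw [hdθ, hf', hg', norm_grad_theta ε (f t) (g t) hFt hGt hFp hGp y,
      inner_grad_logsqrt ε hε U (f t) (g t) hU2 hFt hGt hFp hGp y,
      lap_sqrt_div (f t) (g t) hFt hGt hFp hGp y,
      inner_grad_grad U (f t) y, inner_grad_grad U (g t) y]
    simp only [lap]
    have hz : ∑ j, (((ε / (4 * (f t y))) * (fderiv ℝ U y (EuclideanSpace.single j 1) * fderiv ℝ (f t) y (EuclideanSpace.single j 1)) + (ε / (4 * (g t y))) * (fderiv ℝ U y (EuclideanSpace.single j 1) * fderiv ℝ (g t) y (EuclideanSpace.single j 1)) + (-(ε ^ 2) / (4 * (f t y))) * (fderiv ℝ (fun z => fderiv ℝ (f t) z (EuclideanSpace.single j 1)) y (EuclideanSpace.single j 1)) + (-(ε ^ 2) / (4 * (g t y))) * (fderiv ℝ (fun z => fderiv ℝ (g t) z (EuclideanSpace.single j 1)) y (EuclideanSpace.single j 1))) + (((ε / 2 * (fderiv ℝ (g t) y (EuclideanSpace.single j 1) / g t y - fderiv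 ℝ (f t) y (EuclideanSpace.single j 1) / f t y)) ^ 2) / 2 + (ε ^ 2 * (-fderiv ℝ U y (EuclideanSpace.single j 1) / ε / 2 * ((fderiv ℝ (f t) y (EuclideanSpace.single j 1) / f t y + fderiv ℝ (g t) y (EuclideanSpace.single j 1) / g t y) / 2)) + ε ^ 2 * ((fderiv ℝ (fun z => fderiv ℝ (f t) z (EuclideanSpace.single j 1)) y (EuclideanSpace.single j 1) * g t y + 2 * (fderiv ℝ (f t) y (EuclideanSpace.single j 1) * fderiv ℝ (g t) y (EuclideanSpace.single j 1)) + f t y * fderiv ℝ (fun z => fderiv ℝ (g t) z (EuclideanSpace.single j 1)) y (EuclideanSpace.single j 1)) / (4 * (f t y * g t y)) - (fderiv ℝ (f t) y (EuclideanSpace.single j 1) * g t y + f t y * fderiv ℝ (g t) y (EuclideanSpace.single j 1)) ^ 2 / (8 * (f t y * g t y) ^ 2))))) = 0 := by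
      refine Finset.sum_eq_zero fun j _ => ?_
      exact hj_perj ε (f t y) (g t y) (fderiv ℝ U y (EuclideanSpace.single j 1))
        (fderiv ℝ (f t) y (EuclideanSpace.single j 1))
        (fderiv ℝ (g t) y (EuclideanSpace.single j 1))
        (fderiv ℝ (fun z => fderiv ℝ (f t) z (EuclideanSpace.single j 1)) y (EuclideanSpace.single j 1))
        (fderiv ℝ (fun z => fderiv ℝ (g t) z (EuclideanSpace.single j 1)) y (EuclideanSpace.single j 1))
        Fne Gne hε.ne'
    have hs1 : ∑ j, (((ε / (4 * (f t y))) * (fderiv ℝ U y (EuclideanSpace.single j 1) * fderiv ℝ (f t) y (EuclideanSpace.single j 1)) + (ε / (4 * (g t y))) * (fderiv ℝ U y (EuclideanSpace.single j 1) * fderiv ℝ (g t) y (EuclideanSpace.single j 1)) + (-(ε ^ 2) / (4 * (f t y))) * (fderiv ℝ (fun z => fderiv ℝ (f t) z (EuclideanSpace.single j 1)) y (EuclideanSpace.single j 1)) + (-(ε ^ 2) / (4 * (g t y))) * (fderiv ℝ (fun z => fderiv ℝ (g t) z (EuclideanSpace.single j 1)) y (EuclideanSpace.single j 1))) + (((ε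 / 2 * (fderiv ℝ (g t) y (EuclideanSpace.single j 1) / g t y - fderiv ℝ (f t) y (EuclideanSpace.single j 1) / f t y)) ^ 2) / 2 + (ε ^ 2 * (-fderiv ℝ U y (EuclideanSpace.single j 1) / ε / 2 * ((fderiv ℝ (f t) y (EuclideanSpace.single j 1) / f t y + fderiv ℝ (g t) y (EuclideanSpace.single j 1) / g t y) / 2)) + ε ^ 2 * ((fderiv ℝ (fun z => fderiv ℝ (f t) z (EuclideanSpace.single j 1)) y (EuclideanSpace.single j 1) * g t y + 2 * (fderiv ℝ (f t) y (EuclideanSpace.single j 1) * fderiv ℝ (g t) y (EuclideanSpace.single j 1)) + f t y * fderiv ℝ (fun z => fderiv ℝ (g t) z (EuclideanSpace.single j 1)) y (EuclideanSpace.single j 1)) / (4 * (f t y * g t y)) - (fderiv ℝ (f t) y (EuclideanSpace.single j 1) * g t y + f t y * fderiv ℝ (g t) y (EuclideanSpace.single j 1)) ^ 2 / (8 * (f t y * g t y) ^ 2)))))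
        = ∑ j, ((ε / (4 * (f t y))) * (fderiv ℝ U y (EuclideanSpace.single j 1) * fderiv ℝ (f t) y (EuclideanSpace.single j 1)) + (ε / (4 * (g t y))) * (fderiv ℝ U y (EuclideanSpace.single j 1) * fderiv ℝ (g t) y (EuclideanSpace.single j 1)) + (-(ε ^ 2) / (4 * (f t y))) * (fderiv ℝ (fun z => fderiv ℝ (f t) z (EuclideanSpace.single j 1)) y (EuclideanSpace.single j 1)) + (-(ε ^ 2) / (4 * (g t y))) * (fderiv ℝ (fun z => fderiv ℝ (g t) z (EuclideanSpace.single j 1)) y (EuclideanSpace.single j 1))) + ∑ j, (((ε / 2 * (fderiv ℝ (g t) y (EuclideanSpace.single j 1) / g t y - fderiv ℝ (f t) y (EuclideanSpace.single j 1) / f t y)) ^ 2) / 2 + (ε ^ 2 * (-fderiv ℝ U y (EuclideanSpace.single j 1) / ε / 2 * ((fderiv ℝ (f t) y (EuclideanSpace.single j 1) / f t y + fderiv ℝ (g t) y (EuclideanSpace.single j 1) / g t y) / 2)) + ε ^ 2 * ((fderiv ℝ (fun z => fderiv ℝ (f t) z (EuclideanSpace.single j 1)) y (EuclideanSpace.single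 j 1) * g t y + 2 * (fderiv ℝ (f t) y (EuclideanSpace.single j 1) * fderiv ℝ (g t) y (EuclideanSpace.single j 1)) + f t y * fderiv ℝ (fun z => fderiv ℝ (g t) z (EuclideanSpace.single j 1)) y (EuclideanSpace.single j 1)) / (4 * (f t y * g t y)) - (fderiv ℝ (f t) y (EuclideanSpace.single j 1) * g t y + f t y * fderiv ℝ (g t) y (EuclideanSpace.single j 1)) ^ 2 / (8 * (f t y * g t y) ^ 2)))) :=
      Finset.sum_add_distrib
    have hs2 : ∑ j, (((ε / 2 * (fderiv ℝ (g t) y (EuclideanSpace.single j 1) / g t y - fderiv ℝ (f t) y (EuclideanSpace.single j 1) / f t y)) ^ 2) / 2 + (ε ^ 2 * (-fderiv ℝ U y (EuclideanSpace.single j 1) / ε / 2 * ((fderiv ℝ (f t) y (EuclideanSpace.single j 1) / f t y + fderiv ℝ (g t) y (EuclideanSpace.single j 1) / g t y) / 2)) + ε ^ 2 * ((fderiv ℝ (fun z => fderiv ℝ (f t) z (EuclideanSpace.single j 1)) y (EuclideanSpace.single j 1) * g t y + 2 * (fderiv ℝ (f t) y (EuclideanSpace.single j 1) * fderiv ℝ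 (g t) y (EuclideanSpace.single j 1)) + f t y * fderiv ℝ (fun z => fderiv ℝ (g t) z (EuclideanSpace.single j 1)) y (EuclideanSpace.single j 1)) / (4 * (f t y * g t y)) - (fderiv ℝ (f t) y (EuclideanSpace.single j 1) * g t y + f t y * fderiv ℝ (g t) y (EuclideanSpace.single j 1)) ^ 2 / (8 * (f t y * g t y) ^ 2))))
        = ∑ j, (((ε / 2 * (fderiv ℝ (g t) y (EuclideanSpace.single j 1) / g t y - fderiv ℝ (f t) y (EuclideanSpace.single j 1) / f t y)) ^ 2) / 2) + ∑ j, (ε ^ 2 * (-fderiv ℝ U y (EuclideanSpace.single j 1) / ε / 2 * ((fderiv ℝ (f t) y (EuclideanSpace.single j 1) / f t y + fderiv ℝ (g t) y (EuclideanSpace.single j 1) / g t y) / 2)) + ε ^ 2 * ((fderiv ℝ (fun z => fderiv ℝ (f t) z (EuclideanSpace.single j 1)) y (EuclideanSpace.single j 1) * g t y + 2 * (fderiv ℝ (f t) y (EuclideanSpace.single j 1) * fderiv ℝ (g t) y (EuclideanSpace.single j 1)) + f t y * fderiv ℝ (fun z => fderiv ℝ (g t) z (EuclideanSpace.single j 1))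 y (EuclideanSpace.single j 1)) / (4 * (f t y * g t y)) - (fderiv ℝ (f t) y (EuclideanSpace.single j 1) * g t y + f t y * fderiv ℝ (g t) y (EuclideanSpace.single j 1)) ^ 2 / (8 * (f t y * g t y) ^ 2))) :=
      Finset.sum_add_distrib
    have hs3 : ∑ j, (ε ^ 2 * (-fderiv ℝ U y (EuclideanSpace.single j 1) / ε / 2 * ((fderiv ℝ (f t) y (EuclideanSpace.single j 1) / f t y + fderiv ℝ (g t) y (EuclideanSpace.single j 1) / g t y) / 2)) + ε ^ 2 * ((fderiv ℝ (fun z => fderiv ℝ (f t) z (EuclideanSpace.single j 1)) y (EuclideanSpace.single j 1) * g t y + 2 * (fderiv ℝ (f t) y (EuclideanSpace.single j 1) * fderiv ℝ (g t) y (EuclideanSpace.single j 1)) + f t y * fderiv ℝ (fun z => fderiv ℝ (g t) z (EuclideanSpace.single j 1)) y (EuclideanSpace.single j 1)) / (4 * (f t y * g t y)) - (fderiv ℝ (f t) y (EuclideanSpace.single j 1) * g t y + f t y * fderiv ℝ (g t) y (EuclideanSpace.single j 1)) ^ 2 / (8 * (f t y * g t y) ^ 2)))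
        = ∑ j, (ε ^ 2 * (-fderiv ℝ U y (EuclideanSpace.single j 1) / ε / 2 * ((fderiv ℝ (f t) y (EuclideanSpace.single j 1) / f t y + fderiv ℝ (g t) y (EuclideanSpace.single j 1) / g t y) / 2))) + ∑ j, (ε ^ 2 * ((fderiv ℝ (fun z => fderiv ℝ (f t) z (EuclideanSpace.single j 1)) y (EuclideanSpace.single j 1) * g t y + 2 * (fderiv ℝ (f t) y (EuclideanSpace.single j 1) * fderiv ℝ (g t) y (EuclideanSpace.single j 1)) + f t y * fderiv ℝ (fun z => fderiv ℝ (g t) z (EuclideanSpace.single j 1)) y (EuclideanSpace.single j 1)) / (4 * (f t y * g t y)) - (fderiv ℝ (f t) y (EuclideanSpace.single j 1) * g t y + f t y * fderiv ℝ (g t) y (EuclideanSpace.single j 1)) ^ 2 / (8 * (f t y * g t y) ^ 2))) :=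
      Finset.sum_add_distrib
    have hphi : ∑ j, ((ε / (4 * (f t y))) * (fderiv ℝ U y (EuclideanSpace.single j 1) * fderiv ℝ (f t) y (EuclideanSpace.single j 1)) + (ε / (4 * (g t y))) * (fderiv ℝ U y (EuclideanSpace.single j 1) * fderiv ℝ (g t) y (EuclideanSpace.single j 1)) + (-(ε ^ 2) / (4 * (f t y))) * (fderiv ℝ (fun z => fderiv ℝ (f t) z (EuclideanSpace.single j 1)) y (EuclideanSpace.single j 1)) + (-(ε ^ 2) / (4 * (g t y))) * (fderiv ℝ (fun z => fderiv ℝ (g t) z (EuclideanSpace.single j 1)) y (EuclideanSpace.single j 1)))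
        = (ε / (4 * (f t y))) * ∑ j, fderiv ℝ U y (EuclideanSpace.single j 1) * fderiv ℝ (f t) y (EuclideanSpace.single j 1)
          + (ε / (4 * (g t y))) * ∑ j, fderiv ℝ U y (EuclideanSpace.single j 1) * fderiv ℝ (g t) y (EuclideanSpace.single j 1)
          + (-(ε ^ 2) / (4 * (f t y))) * ∑ j, fderiv ℝ (fun z => fderiv ℝ (f t) z (EuclideanSpace.single j 1)) y (EuclideanSpace.single j 1)
          + (-(ε ^ 2) / (4 * (g t y))) * ∑ j, fderiv ℝ (fun z => fderiv ℝ (g t) z (EuclideanSpace.single j 1)) y (EuclideanSpace.single j 1) := by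
      rw [sum_lin4]
    have h4 : (∑ j, ((ε / 2 * (fderiv ℝ (g t) y (EuclideanSpace.single j 1) / g t y - fderiv ℝ (f t) y (EuclideanSpace.single j 1) / f t y)) ^ 2)) / 2 = ∑ j, (((ε / 2 * (fderiv ℝ (g t) y (EuclideanSpace.single j 1) / g t y - fderiv ℝ (f t) y (EuclideanSpace.single j 1) / f t y)) ^ 2) / 2) := Finset.sum_div _ _ _
    have h5 : ε ^ 2 * ∑ j, (-fderiv ℝ U y (EuclideanSpace.single j 1) / ε / 2 * ((fderiv ℝ (f t) y (EuclideanSpace.single j 1) / f t y + fderiv ℝ (g t) y (EuclideanSpace.single j 1) / g t y) / 2)) = ∑ j, (ε ^ 2 * (-fderiv ℝ U y (EuclideanSpace.single j 1) / ε / 2 * ((fderiv ℝ (f t) y (EuclideanSpace.single j 1) / f t y + fderiv ℝ (g t) y (EuclideanSpace.single j 1) / g t y) / 2))) := Finset.mul_sum _ _ _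
    have h6 : ε ^ 2 * ∑ j, ((fderiv ℝ (fun z => fderiv ℝ (f t) z (EuclideanSpace.single j 1)) y (EuclideanSpace.single j 1) * g t y + 2 * (fderiv ℝ (f t) y (EuclideanSpace.single j 1) * fderiv ℝ (g t) y (EuclideanSpace.single j 1)) + f t y * fderiv ℝ (fun z => fderiv ℝ (g t) z (EuclideanSpace.single j 1)) y (EuclideanSpace.single j 1)) / (4 * (f t y * g t y)) - (fderiv ℝ (f t) y (EuclideanSpace.single j 1) * g t y + f t y * fderiv ℝ (g t) y (EuclideanSpace.single j 1)) ^ 2 / (8 * (f t y * g t y) ^ 2)) = ∑ j, (ε ^ 2 * ((fderiv ℝ (fun z => fderiv ℝ (f t) z (EuclideanSpace.single j 1)) y (EuclideanSpace.single j 1) * g t y + 2 * (fderiv ℝ (f t) y (EuclideanSpace.single j 1) * fderiv ℝ (g t) y (EuclideanSpace.single j 1)) + f t y * fderiv ℝ (fun z => fderiv ℝ (g t) z (EuclideanSpace.single j 1)) y (EuclideanSpace.single j 1)) / (4 * (f t y * g t y)) - (fderiv ℝ (f t) y (EuclideanSpace.single j 1) * g t y + f t y * fderiv ℝ (g t) y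 (EuclideanSpace.single j 1)) ^ 2 / (8 * (f t y * g t y) ^ 2))) := Finset.mul_sum _ _ _
    have h1 : ε / 2 * (-((-(∑ j, fderiv ℝ U y (EuclideanSpace.single j 1) * fderiv ℝ (g t) y (EuclideanSpace.single j 1)) + ε * ∑ j, fderiv ℝ (fun z => fderiv ℝ (g t) z (EuclideanSpace.single j 1)) y (EuclideanSpace.single j 1)) / 2 + V t y / ε * g t y) / g t y
            - ((-(∑ j, fderiv ℝ U y (EuclideanSpace.single j 1) * fderiv ℝ (f t) y (EuclideanSpace.single j 1)) + ε * ∑ j, fderiv ℝ (fun z => fderiv ℝ (f t) z (EuclideanSpace.single j 1)) y (EuclideanSpace.single j 1)) / 2 + V t y / ε * f t y) / f t y) + V t y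
        = (ε / (4 * (f t y))) * ∑ j, fderiv ℝ U y (EuclideanSpace.single j 1) * fderiv ℝ (f t) y (EuclideanSpace.single j 1)
          + (ε / (4 * (g t y))) * ∑ j, fderiv ℝ U y (EuclideanSpace.single j 1) * fderiv ℝ (g t) y (EuclideanSpace.single j 1)
          + (-(ε ^ 2) / (4 * (f t y))) * ∑ j, fderiv ℝ (fun z => fderiv ℝ (f t) z (EuclideanSpace.single j 1)) y (EuclideanSpace.single j 1)
          + (-(ε ^ 2) / (4 * (g t y))) * ∑ j, fderiv ℝ (fun z => fderiv ℝ (g t) z (EuclideanSpace.single j 1)) y (EuclideanSpace.single j 1) := by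
      field_simp
      ring
    linear_combination h1 - hphi + hz - hs1 - hs2 - hs3 + h4 + h5 + h6

end
end
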